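/- arXiv:2310.11908 — 6 statements merged into one kernel-verified Lean document; each statement's English description precedes it below -/
import Mathlib

section
/- There is no deterministic truthful mechanism for the maximum vertex-weighted bipartite b-matching problem that always returns an optimal (maximum-weight) matching when agents can strategically hide edges. Concretely: for any deterministic mechanism M mapping each reported edge set E' ⊆ E to a b-matching of maximum total task value with respect to E', there exists an instance and an agent who, by reporting a strict nonempty subset of its true incident edges, strictly increases the total value of tasks assigned to it. -/
open Classical

/-- An edge of the bipartite graph: a pair (agent, task). -/
abbrev Edge (n m : ℕ) := Fin n × Fin m

variable {n m : ℕ}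

/-- Number of tasks assigned to agent `i` in the edge set `μ`. -/
def deg (μ : Finset (Edge n m)) (i : Fin n) : ℕ := (μ.filter (fun e => e.1 = i)).card

/-- `μ` is a b-matching over the edge set `E'`: it uses only edges of `E'`, each agent `i`
receives at most `b i` tasks, and each task is matched to at most one agent. -/
def IsBMatching (b : Fin n → ℕ) (E' μ : Finset (Edge n m)) : Prop :=
  μ ⊆ E' ∧ (∀ i, deg μ i ≤ b i) ∧ ∀ j : Fin m, (μ.filter (fun e => e.2 = j)).card ≤ 1

/-- Weight of a matching: total value of matched tasks. -/
noncomputable def weight (q : Fin m → ℝ) (μ : Finset (Edge n m)) : ℝ := ∑ e ∈ μ, q e.2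

/-- Utility of agent `i`: total value of the tasks matched to `i`. -/
noncomputable def util (q : Fin m → ℝ) (i : Fin n) (μ : Finset (Edge n m)) : ℝ :=
  ∑ e ∈ μ.filter (fun e => e.1 = i), q e.2

/-- `μ` is a maximum vertex-weighted b-matching over the edge set `E'`. -/
def IsMaxMatching (b : Fin n → ℕ) (q : Fin m → ℝ) (E' μ : Finset (Edge n m)) : Prop :=
  IsBMatching b E' μ ∧ ∀ ν, IsBMatching b E' ν → weight q ν ≤ weight q μ

/-- The edges of `E` incident to agent `i`. -/
def agentEdges (E : Finset (Edge n m)) (i : Fin n) : Finset (Edge n m) :=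
  E.filter (fun e => e.1 = i)

/-- The edge set obtained from `E` when agent `i` reports `S` instead of its true edges. -/
def deviate (E : Finset (Edge n m)) (i : Fin n) (S : Finset (Edge n m)) : Finset (Edge n m) :=
  E.filter (fun e => e.1 ≠ i) ∪ S

/-- A valid report of agent `i`: a nonempty subset of its true incident edges. -/
def ValidReport (E : Finset (Edge n m)) (i : Fin n) (S : Finset (Edge n m)) : Prop :=
  S ⊆ agentEdges E i ∧ S.Nonempty

/-! ### Witness instance -/

noncomputable def qW : Fin 3 → ℝ := fun j => if j = 0 then 1 else 1/10

def bW : Fin 2 → ℕ := fun _ => 1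

def EW : Finset (Edge 2 3) := {(0,0),(0,1),(1,0),(1,2)}
def D1 : Finset (Edge 2 3) := {(1,0),(1,2),(0,0)}
def D2 : Finset (Edge 2 3) := {(0,0),(0,1),(1,0)}

lemma qW_pos : ∀ j, 0 < qW j := by
  intro j; unfold qW; split <;> norm_num

lemma qW0 : qW 0 = 1 := by simp [qW]
lemma qW1 : qW 1 = 1/10 := by unfold qW; rw [if_neg (by decide)]
lemma qW2 : qW 2 = 1/10 := by unfold qW; rw [if_neg (by decide)]

lemma weight_le_card (μ : Finset (Edge 2 3)) : weight qW μ ≤ μ.card := by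
  unfold weight
  calc ∑ e ∈ μ, qW e.2 ≤ ∑ _e ∈ μ, (1:ℝ) :=
        Finset.sum_le_sum (fun e _ => by unfold qW; split <;> norm_num)
    _ = μ.card := by simp

/-- Any maximum matching on `D1` gives agent 0 utility 1. -/
lemma utilD1 (μ : Finset (Edge 2 3)) (h : IsMaxMatching bW qW D1 μ) : util qW 0 μ = 1 := by
  obtain ⟨⟨hsub, hdeg, _⟩, hmax⟩ := h
  have h00 : ((0:Fin 2),(0:Fin 3)) ∈ μ := by
    by_contra h00
    -- every edge of μ is an agent-1 edge
    have hall : ∀ e ∈ μ, (e.1 : Fin 2) = 1 := by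
      intro e he
      have := hsub he
      simp only [D1, Finset.mem_insert, Finset.mem_singleton] at this
      rcases this with h | h | h
      · rw [h]
      · rw [h]
      · exact absurd (h ▸ he) h00
    have hfe : μ.filter (fun e => e.1 = 1) = μ := Finset.filter_eq_self.mpr hall
    have hcard : μ.card ≤ 1 := by
      have := hdeg 1
      rwa [deg, hfe, bW] at this
    have hw : weight qW μ ≤ 1 := by
      have := weight_le_card μ
      have h1 : (μ.card : ℝ) ≤ 1 := by exact_mod_cast hcard
      linarith
    -- the matching {(0,0),(1,2)} has weight 11/10
    have hν : IsBMatching bW D1 {((0:Fin 2),(0:Fin 3)), ((1:Fin 2),(2:Fin 3))} := by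
      refine ⟨by decide, fun i => ?_, fun j => ?_⟩
      · fin_cases i <;> simp [deg, bW, Finset.filter_insert, Finset.filter_singleton]
      · fin_cases j <;> simp [Finset.filter_insert, Finset.filter_singleton]
    have hwν : weight qW {((0:Fin 2),(0:Fin 3)), ((1:Fin 2),(2:Fin 3))} = 11/10 := by
      rw [weight, Finset.sum_insert (by decide), Finset.sum_singleton]
      show qW 0 + qW 2 = 11/10
      rw [qW0, qW2]; norm_num
    have := hmax _ hν
    rw [hwν] at this
    linarith
  have hf : μ.filter (fun e => e.1 = 0) = {((0:Fin 2),(0:Fin 3))} := by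
    apply Finset.Subset.antisymm
    · intro e he
      rw [Finset.mem_filter] at he
      have := hsub he.1
      simp only [D1, Finset.mem_insert, Finset.mem_singleton] at this
      rcases this with h | h | h
      · exact absurd (h ▸ he.2) (by decide)
      · exact absurd (h ▸ he.2) (by decide)
      · simp [h]
    · intro e he
      rw [Finset.mem_singleton] at he
      rw [Finset.mem_filter, he]
      exact ⟨h00, rfl⟩
  rw [util, hf, Finset.sum_singleton, qW0]

/-- Any maximum matching on `D2` gives agent 1 utility 1. -/
lemma utilD2 (μ : Finset (Edge 2 3)) (h : IsMaxMatching bW qW D2 μ) : util qW 1 μ = 1 := by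
  obtain ⟨⟨hsub, hdeg, _⟩, hmax⟩ := h
  have h10 : ((1:Fin 2),(0:Fin 3)) ∈ μ := by
    by_contra h10
    have hall : ∀ e ∈ μ, (e.1 : Fin 2) = 0 := by
      intro e he
      have := hsub he
      simp only [D2, Finset.mem_insert, Finset.mem_singleton] at this
      rcases this with h | h | h
      · rw [h]
      · rw [h]
      · exact absurd (h ▸ he) h10
    have hfe : μ.filter (fun e => e.1 = 0) = μ := Finset.filter_eq_self.mpr hall
    have hcard : μ.card ≤ 1 := by
      have := hdeg 0
      rwa [deg, hfe, bW] at this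
    have hw : weight qW μ ≤ 1 := by
      have := weight_le_card μ
      have h1 : (μ.card : ℝ) ≤ 1 := by exact_mod_cast hcard
      linarith
    have hν : IsBMatching bW D2 {((0:Fin 2),(1:Fin 3)), ((1:Fin 2),(0:Fin 3))} := by
      refine ⟨by decide, fun i => ?_, fun j => ?_⟩
      · fin_cases i <;> simp [deg, bW, Finset.filter_insert, Finset.filter_singleton]
      · fin_cases j <;> simp [Finset.filter_insert, Finset.filter_singleton]
    have hwν : weight qW {((0:Fin 2),(1:Fin 3)), ((1:Fin 2),(0:Fin 3))} = 11/10 := by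
      rw [weight, Finset.sum_insert (by decide), Finset.sum_singleton]
      show qW 1 + qW 0 = 11/10
      rw [qW0, qW1]; norm_num
    have := hmax _ hν
    rw [hwν] at this
    linarith
  have hf : μ.filter (fun e => e.1 = 1) = {((1:Fin 2),(0:Fin 3))} := by
    apply Finset.Subset.antisymm
    · intro e he
      rw [Finset.mem_filter] at he
      have := hsub he.1
      simp only [D2, Finset.mem_insert, Finset.mem_singleton] at this
      rcases this with h | h | h
      · exact absurd (h ▸ he.2) (by decide)
      · exact absurd (h ▸ he.2) (by decide)
      · simp [h]
    · intro e he
      rw [Finset.mem_singleton] at he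
      rw [Finset.mem_filter, he]
      exact ⟨h10, rfl⟩
  rw [util, hf, Finset.sum_singleton, qW0]

/-- There is no deterministic truthful mechanism that always returns a
maximum vertex-weighted b-matching when agents can strategically hide edges: for any
deterministic mechanism `M` mapping each reported edge set to a maximum-weight b-matching
with respect to the report, there is an instance (with positive task values) and an agent
who, by reporting a strict nonempty subset of its true incident edges, strictly increases
its utility. -/
theorem no_truthful_optimal_mechanism
    (M : (n m : ℕ) → (Fin n → ℕ) → (Fin m → ℝ) → Finset (Edge n m) → Finset (Edge n m))
    (hOpt : ∀ (n m : ℕ) (b : Fin n → ℕ) (q : Fin m → ℝ), (∀ j, 0 < q j) →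
      ∀ E' : Finset (Edge n m), IsMaxMatching b q E' (M n m b q E')) :
    ∃ (n m : ℕ) (b : Fin n → ℕ) (q : Fin m → ℝ) (E : Finset (Edge n m)) (i : Fin n)
      (S : Finset (Edge n m)),
      (∀ j, 0 < q j) ∧ ValidReport E i S ∧ S ⊂ agentEdges E i ∧
      util q i (M n m b q E) < util q i (M n m b q (deviate E i S)) := by
  set μ := M 2 3 bW qW EW with hμ
  obtain ⟨⟨hsub, _, htask⟩, _⟩ := hOpt 2 3 bW qW qW_pos EW
  by_cases h00 : ((0:Fin 2),(0:Fin 3)) ∈ μ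
  · -- agent 1 gets at most 1/10; it deviates reporting only (1,0)
    refine ⟨2, 3, bW, qW, EW, 1, {(1,0)}, qW_pos,
      ⟨by decide, ⟨_, Finset.mem_singleton_self _⟩⟩, by decide, ?_⟩
    have hdev : deviate EW 1 {((1:Fin 2),(0:Fin 3))} = D2 := by decide
    rw [hdev]
    have hR := utilD2 _ (hOpt 2 3 bW qW qW_pos D2)
    rw [hR]
    -- util of agent 1 in μ is at most 1/10
    have h10 : ((1:Fin 2),(0:Fin 3)) ∉ μ := by
      intro h10
      have := htask 0
      have hpair : ({((0:Fin 2),(0:Fin 3)), ((1:Fin 2),(0:Fin 3))} : Finset (Edge 2 3)) ⊆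
          μ.filter (fun e => e.2 = 0) := by
        intro e he
        simp only [Finset.mem_insert, Finset.mem_singleton] at he
        rcases he with h | h <;> rw [h, Finset.mem_filter]
        · exact ⟨h00, rfl⟩
        · exact ⟨h10, rfl⟩
      have hle := le_trans (Finset.card_le_card hpair) this
      have h2 : ({((0:Fin 2),(0:Fin 3)), ((1:Fin 2),(0:Fin 3))} : Finset (Edge 2 3)).card = 2 := by
        decide
      rw [h2] at hle
      omega
    have hfs : μ.filter (fun e => e.1 = 1) ⊆ {((1:Fin 2),(2:Fin 3))} := by
      intro e he
      rw [Finset.mem_filter] at he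
      have := hsub he.1
      simp only [EW, Finset.mem_insert, Finset.mem_singleton] at this
      rcases this with h | h | h | h
      · exact absurd (h ▸ he.2) (by decide)
      · exact absurd (h ▸ he.2) (by decide)
      · exact absurd (h ▸ he.1) h10
      · simp [h]
    have : util qW 1 μ ≤ 1/10 := by
      rw [util]
      calc ∑ e ∈ μ.filter (fun e => e.1 = 1), qW e.2
          ≤ ∑ e ∈ ({((1:Fin 2),(2:Fin 3))} : Finset (Edge 2 3)), qW e.2 :=
            Finset.sum_le_sum_of_subset_of_nonneg hfs (fun e _ _ => le_of_lt (qW_pos e.2))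
        _ = 1/10 := by rw [Finset.sum_singleton]; exact qW2
    linarith
  · -- agent 0 gets at most 1/10; it deviates reporting only (0,0)
    refine ⟨2, 3, bW, qW, EW, 0, {(0,0)}, qW_pos,
      ⟨by decide, ⟨_, Finset.mem_singleton_self _⟩⟩, by decide, ?_⟩
    have hdev : deviate EW 0 {((0:Fin 2),(0:Fin 3))} = D1 := by decide
    rw [hdev]
    have hR := utilD1 _ (hOpt 2 3 bW qW qW_pos D1)
    rw [hR]
    have hfs : μ.filter (fun e => e.1 = 0) ⊆ {((0:Fin 2),(1:Fin 3))} := by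
      intro e he
      rw [Finset.mem_filter] at he
      have := hsub he.1
      simp only [EW, Finset.mem_insert, Finset.mem_singleton] at this
      rcases this with h | h | h | h
      · exact absurd (h ▸ he.1) h00
      · simp [h]
      · exact absurd (h ▸ he.2) (by decide)
      · exact absurd (h ▸ he.2) (by decide)
    have : util qW 0 μ ≤ 1/10 := by
      rw [util]
      calc ∑ e ∈ μ.filter (fun e => e.1 = 0), qW e.2
          ≤ ∑ e ∈ ({((0:Fin 2),(1:Fin 3))} : Finset (Edge 2 3)), qW e.2 :=
            Finset.sum_le_sum_of_subset_of_nonneg hfs (fun e _ _ => le_of_lt (qW_pos e.2))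
        _ = 1/10 := by rw [Finset.sum_singleton]; exact qW1
    linarith
end

section
/- No deterministic truthful mechanism for the maximum vertex-weighted bipartite b-matching problem (with agents able to hide edges but not invent them) achieves an approximation ratio strictly better than 2. Formally: for every δ > 0 and every deterministic truthful mechanism M, there exists an instance on which the ratio of the maximum-weight b-matching value to the weight of M's output exceeds 2 − δ. -/
open Classical

variable {n m : ℕ}

instance (b : Fin n → ℕ) (E' μ : Finset (Edge n m)) : Decidable (IsBMatching b E' μ) := by
  unfold IsBMatching; infer_instance

instance (E : Finset (Edge n m)) (i : Fin n) (S : Finset (Edge n m)) :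
    Decidable (ValidReport E i S) := by
  unfold ValidReport; infer_instance

/-- Auxiliary task values: task 0 has value `1 + δ`, task 1 has value `1`. -/
noncomputable def qq (δ : ℝ) : Fin 2 → ℝ := fun j => if j = 0 then 1 + δ else 1

lemma qq_pos {δ : ℝ} (hδ : 0 < δ) : ∀ j, 0 < qq δ j := by
  intro j; unfold qq; split <;> linarith

lemma qq_le {δ : ℝ} (hδ : 0 < δ) (j : Fin 2) : qq δ j ≤ 1 + δ := by
  unfold qq; split <;> linarith

lemma qq_zero (δ : ℝ) : qq δ 0 = 1 + δ := by simp [qq]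

lemma qq_one (δ : ℝ) : qq δ 1 = 1 := by simp [qq]

lemma sum_qq (δ : ℝ) : ∑ j, qq δ j = 2 + δ := by
  rw [Fin.sum_univ_two, qq_zero, qq_one]; ring

lemma weight_le_sum (q : Fin m → ℝ) (hq : ∀ j, 0 ≤ q j) (ν : Finset (Edge n m))
    (h : ∀ j, (ν.filter (fun e => e.2 = j)).card ≤ 1) : weight q ν ≤ ∑ j, q j := by
  have hfib : weight q ν = ∑ j : Fin m, ∑ e ∈ ν.filter (fun e => e.2 = j), q e.2 := by
    rw [weight, Finset.sum_fiberwise]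
  rw [hfib]
  apply Finset.sum_le_sum
  intro j _
  have h1 : ∑ e ∈ ν.filter (fun e => e.2 = j), q e.2
      = ∑ _e ∈ ν.filter (fun e => e.2 = j), q j := by
    apply Finset.sum_congr rfl
    intro e he
    rw [(Finset.mem_filter.1 he).2]
  rw [h1, Finset.sum_const, nsmul_eq_mul]
  have h2 : ((ν.filter (fun e => e.2 = j)).card : ℝ) ≤ 1 := by exact_mod_cast h j
  nlinarith [hq j]

lemma weight_nonneg {δ : ℝ} (hδ : 0 < δ) (B : Finset (Edge 2 2)) : 0 ≤ weight (qq δ) B :=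
  Finset.sum_nonneg fun e _ => (qq_pos hδ e.2).le

lemma weight_small {δ : ℝ} (hδ : 0 < δ) (B : Finset (Edge 2 2)) (hB : B.card ≤ 1) :
    weight (qq δ) B ≤ 1 + δ := by
  have h1 : weight (qq δ) B ≤ B.card • (1 + δ) :=
    Finset.sum_le_card_nsmul _ _ _ (fun e _ => qq_le hδ e.2)
  have h2 : (B.card : ℝ) ≤ 1 := by exact_mod_cast hB
  rw [nsmul_eq_mul] at h1
  nlinarith

lemma isMax_of {δ : ℝ} (hδ : 0 < δ) (E' μ : Finset (Edge 2 2))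
    (hμ : IsBMatching (fun _ => 1) E' μ) (hw : weight (qq δ) μ = 2 + δ) :
    IsMaxMatching (fun _ => 1) (qq δ) E' μ := by
  refine ⟨hμ, fun ν hν => ?_⟩
  calc weight (qq δ) ν ≤ ∑ j, qq δ j :=
        weight_le_sum _ (fun j => (qq_pos hδ j).le) _ hν.2.2
    _ = 2 + δ := sum_qq δ
    _ = weight (qq δ) μ := hw.symm

lemma weight_pair1 (δ : ℝ) :
    weight (qq δ) ({((0 : Fin 2), (0 : Fin 2)), (1, 1)} : Finset (Edge 2 2)) = 2 + δ := by
  rw [weight, Finset.sum_pair (by decide)]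
  simp only [qq_zero, qq_one]; ring

lemma weight_pair2 (δ : ℝ) :
    weight (qq δ) ({((0 : Fin 2), (1 : Fin 2)), (1, 0)} : Finset (Edge 2 2)) = 2 + δ := by
  rw [weight, Finset.sum_pair (by decide)]
  simp only [qq_zero, qq_one]; ring

lemma classify : ∀ A : Finset (Edge 2 2), IsBMatching (fun _ => 1) Finset.univ A →
    A = {(0, 0), (1, 1)} ∨ A = {(0, 1), (1, 0)} ∨ A.card ≤ 1 := by decide

lemma final_ineq {δ w : ℝ} (hδ : 0 < δ) (hw0 : 0 ≤ w) (hw : w ≤ 1 + δ) :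
    (2 - δ) * w < 2 + δ := by
  rcases le_or_gt (2 - δ) 0 with h | h
  · nlinarith
  · nlinarith

/-- No deterministic truthful mechanism for the maximum vertex-weighted
bipartite b-matching problem (agents may hide edges but not invent them) achieves an
approximation ratio strictly better than 2: for every `δ > 0` and every deterministic
truthful mechanism `M` (always outputting a b-matching over the reported edges), there is an
instance on which the optimal weight exceeds `(2 - δ)` times the weight of `M`'s output. -/
theorem no_truthful_mechanism_beats_two (δ : ℝ) (hδ : 0 < δ)
    (M : (n m : ℕ) → (Fin n → ℕ) → (Fin m → ℝ) → Finset (Edge n m) → Finset (Edge n m))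
    (hFeas : ∀ (n m : ℕ) (b : Fin n → ℕ) (q : Fin m → ℝ), (∀ j, 0 < q j) →
      ∀ E' : Finset (Edge n m), IsBMatching b E' (M n m b q E'))
    (hTruth : ∀ (n m : ℕ) (b : Fin n → ℕ) (q : Fin m → ℝ), (∀ j, 0 < q j) →
      ∀ (E : Finset (Edge n m)) (i : Fin n) (S : Finset (Edge n m)), ValidReport E i S →
        util q i (M n m b q (deviate E i S)) ≤ util q i (M n m b q E)) :
    ∃ (n m : ℕ) (b : Fin n → ℕ) (q : Fin m → ℝ) (E μ : Finset (Edge n m)),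
      (∀ j, 0 < q j) ∧ IsMaxMatching b q E μ ∧
      (2 - δ) * weight q (M n m b q E) < weight q μ := by
  classical
  have hq := qq_pos hδ
  set A := M 2 2 (fun _ => 1) (qq δ) Finset.univ with hAdef
  have hAfeas : IsBMatching (fun _ => 1) Finset.univ A :=
    hFeas 2 2 (fun _ => 1) (qq δ) hq Finset.univ
  rcases classify A hAfeas with h1 | h2 | h3
  · -- A = {(0,0),(1,1)} : agent 1 deviates, hiding its edge to task 1
    have hvr : ValidReport (Finset.univ : Finset (Edge 2 2)) 1
        {((1 : Fin 2), (0 : Fin 2))} := by decide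
    set E₂ := deviate (Finset.univ : Finset (Edge 2 2)) 1 {((1 : Fin 2), (0 : Fin 2))}
      with hE₂def
    have hE₂ : E₂ = ({(0, 0), (0, 1), (1, 0)} : Finset (Edge 2 2)) := by decide
    set B := M 2 2 (fun _ => 1) (qq δ) E₂ with hBdef
    have hBfeas : IsBMatching (fun _ => 1) E₂ B := hFeas 2 2 (fun _ => 1) (qq δ) hq E₂
    have htr : util (qq δ) 1 B ≤ util (qq δ) 1 A :=
      hTruth 2 2 (fun _ => 1) (qq δ) hq Finset.univ 1 _ hvr
    have hutilA : util (qq δ) 1 A = 1 := by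
      rw [h1, util]
      have hf : (({((0 : Fin 2), (0 : Fin 2)), (1, 1)} : Finset (Edge 2 2)).filter
          (fun e => e.1 = 1)) = {(1, 1)} := by decide
      rw [hf, Finset.sum_singleton, qq_one]
    have h10 : ((1 : Fin 2), (0 : Fin 2)) ∉ B := by
      intro hmem
      have hsub : B.filter (fun e => e.1 = 1) ⊆ E₂.filter (fun e => e.1 = 1) :=
        Finset.filter_subset_filter _ hBfeas.1
      have hEf : E₂.filter (fun e => e.1 = 1) = {((1 : Fin 2), (0 : Fin 2))} := by
        rw [hE₂]; decide
      have hf : B.filter (fun e => e.1 = 1) = {((1 : Fin 2), (0 : Fin 2))} :=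
        Finset.Subset.antisymm (hEf ▸ hsub)
          (Finset.singleton_subset_iff.2 (Finset.mem_filter.2 ⟨hmem, rfl⟩))
      have : util (qq δ) 1 B = 1 + δ := by
        rw [util, hf, Finset.sum_singleton, qq_zero]
      linarith [htr, hutilA.symm ▸ htr]
    have hB0 : ∀ e ∈ B, e.1 = (0 : Fin 2) := by
      intro e he
      have heE : e ∈ ({((0 : Fin 2), (0 : Fin 2)), (0, 1), (1, 0)} : Finset (Edge 2 2)) :=
        hE₂ ▸ hBfeas.1 he
      simp only [Finset.mem_insert, Finset.mem_singleton] at heE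
      rcases heE with rfl | rfl | rfl
      · rfl
      · rfl
      · exact absurd he h10
    have hcard : B.card ≤ 1 := by
      have hdeg := hBfeas.2.1 0
      rwa [deg, Finset.filter_true_of_mem hB0] at hdeg
    refine ⟨2, 2, fun _ => 1, qq δ, E₂, {(0, 1), (1, 0)}, hq, ?_, ?_⟩
    · exact isMax_of hδ _ _ (by rw [hE₂]; decide) (weight_pair2 δ)
    · rw [weight_pair2 δ]
      exact final_ineq hδ (weight_nonneg hδ B) (weight_small hδ B hcard)
  · -- A = {(0,1),(1,0)} : agent 0 deviates, hiding its edge to task 1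
    have hvr : ValidReport (Finset.univ : Finset (Edge 2 2)) 0
        {((0 : Fin 2), (0 : Fin 2))} := by decide
    set E₁ := deviate (Finset.univ : Finset (Edge 2 2)) 0 {((0 : Fin 2), (0 : Fin 2))}
      with hE₁def
    have hE₁ : E₁ = ({(0, 0), (1, 0), (1, 1)} : Finset (Edge 2 2)) := by decide
    set B := M 2 2 (fun _ => 1) (qq δ) E₁ with hBdef
    have hBfeas : IsBMatching (fun _ => 1) E₁ B := hFeas 2 2 (fun _ => 1) (qq δ) hq E₁
    have htr : util (qq δ) 0 B ≤ util (qq δ) 0 A :=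
      hTruth 2 2 (fun _ => 1) (qq δ) hq Finset.univ 0 _ hvr
    have hutilA : util (qq δ) 0 A = 1 := by
      rw [h2, util]
      have hf : (({((0 : Fin 2), (1 : Fin 2)), (1, 0)} : Finset (Edge 2 2)).filter
          (fun e => e.1 = 0)) = {(0, 1)} := by decide
      rw [hf, Finset.sum_singleton, qq_one]
    have h00 : ((0 : Fin 2), (0 : Fin 2)) ∉ B := by
      intro hmem
      have hsub : B.filter (fun e => e.1 = 0) ⊆ E₁.filter (fun e => e.1 = 0) :=
        Finset.filter_subset_filter _ hBfeas.1
      have hEf : E₁.filter (fun e => e.1 = 0) = {((0 : Fin 2), (0 : Fin 2))} := by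
        rw [hE₁]; decide
      have hf : B.filter (fun e => e.1 = 0) = {((0 : Fin 2), (0 : Fin 2))} :=
        Finset.Subset.antisymm (hEf ▸ hsub)
          (Finset.singleton_subset_iff.2 (Finset.mem_filter.2 ⟨hmem, rfl⟩))
      have : util (qq δ) 0 B = 1 + δ := by
        rw [util, hf, Finset.sum_singleton, qq_zero]
      linarith [htr, hutilA.symm ▸ htr]
    have hB1 : ∀ e ∈ B, e.1 = (1 : Fin 2) := by
      intro e he
      have heE : e ∈ ({((0 : Fin 2), (0 : Fin 2)), (1, 0), (1, 1)} : Finset (Edge 2 2)) :=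
        hE₁ ▸ hBfeas.1 he
      simp only [Finset.mem_insert, Finset.mem_singleton] at heE
      rcases heE with rfl | rfl | rfl
      · exact absurd he h00
      · rfl
      · rfl
    have hcard : B.card ≤ 1 := by
      have hdeg := hBfeas.2.1 1
      rwa [deg, Finset.filter_true_of_mem hB1] at hdeg
    refine ⟨2, 2, fun _ => 1, qq δ, E₁, {(0, 0), (1, 1)}, hq, ?_, ?_⟩
    · exact isMax_of hδ _ _ (by rw [hE₁]; decide) (weight_pair1 δ)
    · rw [weight_pair1 δ]
      exact final_ineq hδ (weight_nonneg hδ B) (weight_small hδ B hcard)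
  · -- M's output on the full instance matches at most one edge
    refine ⟨2, 2, fun _ => 1, qq δ, Finset.univ, {(0, 0), (1, 1)}, hq, ?_, ?_⟩
    · exact isMax_of hδ _ _ (by decide) (weight_pair1 δ)
    · rw [weight_pair1 δ]
      exact final_ineq hδ (weight_nonneg hδ A) (weight_small hδ A h3)
end

section
/- Consider the greedy mechanism M_AP that processes tasks in non-increasing order of value and assigns each task to the first (by a fixed agent priority) unsaturated agent among the agents connected to it, if any. Then M_AP is truthful for agent edge-manipulation: for every agent, reporting its full true edge set yields utility at least as large as reporting any nonempty subset of its edges, holding the other agents' reports fixed. -/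
open Classical

variable {n m : ℕ}

open Classical in
/-- The tasks sorted in non-increasing order of value (ties broken by index). -/
noncomputable def sortedTasks (m : ℕ) (q : Fin m → ℝ) : List (Fin m) :=
  List.insertionSort (fun j k => q k ≤ q j) (List.finRange m)

/-- The greedy mechanism `M_AP`: process tasks in non-increasing value order, assigning each
task to the highest-priority unsaturated agent connected to it, if any. -/
noncomputable def MAP (b : Fin n → ℕ) (q : Fin m → ℝ) (E' : Finset (Edge n m)) :
    Finset (Edge n m) :=
  (sortedTasks m q).foldl (fun μ j =>
    match (List.finRange n).find? (fun i => decide ((i, j) ∈ E' ∧ deg μ i < b i)) with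
    | some i => insert (i, j) μ
    | none => μ) ∅

/-- `p = [(i₁,j₁),…,(i_L,j_L)]` is an augmenting path from task `j = j₁` with respect to the
matching `μ` in the graph `E'`: the edges `(i_ℓ, j_ℓ)` are non-matching edges of `E'`, the
edges `(i_ℓ, j_{ℓ+1})` are matching edges, all interior agents are saturated and the final
agent is unsaturated. -/
structure IsAugPathFrom (b : Fin n → ℕ) (E' μ : Finset (Edge n m)) (j : Fin m)
    (p : List (Edge n m)) : Prop where
  ne : p ≠ []
  starts : ∀ e ∈ p.head?, e.2 = j
  mem : ∀ e ∈ p, e ∈ E' ∧ e ∉ μ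
  matched : ∀ k, (h : k + 1 < p.length) →
    ((p.get ⟨k, Nat.lt_of_succ_lt h⟩).1, (p.get ⟨k + 1, h⟩).2) ∈ μ
  satInterior : ∀ k, (h : k + 1 < p.length) →
    b (p.get ⟨k, Nat.lt_of_succ_lt h⟩).1 ≤ deg μ (p.get ⟨k, Nat.lt_of_succ_lt h⟩).1
  unsatLast : ∀ e ∈ p.getLast?, deg μ e.1 < b e.1
  agentsNodup : (p.map Prod.fst).Nodup
  tasksNodup : (p.map Prod.snd).Nodup

/-- The matching edges of an augmenting path. -/
def pathMatched (p : List (Edge n m)) : List (Edge n m) :=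
  (p.zip p.tail).map (fun ef => (ef.1.1, ef.2.2))

/-- Flip an augmenting path: remove its matching edges and add its non-matching edges. -/
def applyPath (μ : Finset (Edge n m)) (p : List (Edge n m)) : Finset (Edge n m) :=
  (μ \ (pathMatched p).toFinset) ∪ p.toFinset

/-- A numeric key realizing the lexicographic order (by vertex indices) on augmenting paths. -/
def pathKey (n m : ℕ) (p : List (Edge n m)) : ℕ :=
  ((p.flatMap fun (e : Edge n m) => [e.1.val + 1, e.2.val + 1]) ++
    List.replicate (2 * n - 2 * p.length) 0).foldl (fun a d => a * (n + m + 2) + d) 0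

/-- DFS explores agents in priority order and goes deep first: it returns the lexicographically
least augmenting path. -/
def dfsCost (n m : ℕ) (p : List (Edge n m)) : ℕ := pathKey n m p

/-- BFS returns a shortest augmenting path, exploring vertices in priority order: it returns
the lexicographically least augmenting path among those of minimum length. -/
def bfsCost (n m : ℕ) (p : List (Edge n m)) : ℕ :=
  p.length * (n + m + 2) ^ (2 * n + 2) + pathKey n m p

/-- Select the cost-minimal augmenting path from task `j`, if an augmenting path exists. -/
noncomputable def selectPath (cost : List (Edge n m) → ℕ) (b : Fin n → ℕ)
    (E' μ : Finset (Edge n m)) (j : Fin m) : Option (List (Edge n m)) :=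
  if h : ∃ p, IsAugPathFrom b E' μ j p ∧ ∀ p', IsAugPathFrom b E' μ j p' → cost p ≤ cost p'
  then some h.choose else none

/-- The augmenting-path algorithm: process tasks in non-increasing value order, at each step
flipping the augmenting path found by the (deterministic) search given by `cost`. -/
noncomputable def runAug (cost : List (Edge n m) → ℕ) (b : Fin n → ℕ) (q : Fin m → ℝ)
    (E' : Finset (Edge n m)) : Finset (Edge n m) :=
  (sortedTasks m q).foldl (fun μ j =>
    match selectPath cost b E' μ j with
    | some p => applyPath μ p
    | none => μ) ∅

/-- The maximum vertex-weighted b-matching mechanism using breadth-first search. -/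
noncomputable def MBFS (b : Fin n → ℕ) (q : Fin m → ℝ) (E' : Finset (Edge n m)) :
    Finset (Edge n m) := runAug (bfsCost n m) b q E'

/-- The maximum vertex-weighted b-matching mechanism using depth-first search. -/
noncomputable def MDFS (b : Fin n → ℕ) (q : Fin m → ℝ) (E' : Finset (Edge n m)) :
    Finset (Edge n m) := runAug (dfsCost n m) b q E'

/-!
Agents of higher priority than `i` never look at `i`'s edges, so both runs give them the same
tasks, and the tasks left over for `i` are the same in both runs. Running the truthful and the
deviating process side by side, the truthful one can only be ahead in the number of tasks given
to `i`: if the deviating run gives `i` a task that the truthful run does not, the truthful run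
refused it because `i` is saturated there. As tasks arrive in non-increasing order of value, each
task by which the truthful run is ahead is worth at least anything the deviating run can still
catch up with; `Dominates` is the resulting potential.
-/

open Finset

theorem Fin.find?_eq_some_of_imp {p p' : Fin n → Bool} {a : Fin n} (h : Fin.find? p = some a)
    (ha : p' a) (hlt : ∀ y < a, p' y → p y) : Fin.find? p' = some a := by
  rw [Fin.find?_eq_some_iff] at h ⊢
  refine ⟨ha, fun y hy => ?_⟩
  by_contra hy'
  simpa [h.2 y hy] using hlt y hy (by simpa using hy')

section Greedy

variable {b : Fin n → ℕ} {q : Fin m → ℝ} {i : Fin n} {E E' μ μ' : Finset (Edge n m)} {j : Fin m}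

def greedyChoice (b : Fin n → ℕ) (E' μ : Finset (Edge n m)) (j : Fin m) : Option (Fin n) :=
  Fin.find? fun a => decide ((a, j) ∈ E' ∧ deg μ a < b a)

def greedyStep (b : Fin n → ℕ) (E' μ : Finset (Edge n m)) (j : Fin m) : Finset (Edge n m) :=
  match greedyChoice b E' μ j with
  | some a => insert (a, j) μ
  | none => μ

theorem MAP_eq_foldl (b : Fin n → ℕ) (q : Fin m → ℝ) (E' : Finset (Edge n m)) :
    MAP b q E' = (sortedTasks m q).foldl (greedyStep b E') ∅ := by
  unfold MAP
  congr 1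
  funext μ j
  rw [greedyStep, greedyChoice, Fin.find?_eq_find?_finRange]

theorem greedyChoice_eq_some_iff {a : Fin n} :
    greedyChoice b E' μ j = some a ↔
      ((a, j) ∈ E' ∧ deg μ a < b a) ∧ ∀ y < a, ¬((y, j) ∈ E' ∧ deg μ y < b y) := by
  simp [greedyChoice]

theorem mem_greedyStep {e : Edge n m} :
    e ∈ greedyStep b E' μ j ↔ e ∈ μ ∨ greedyChoice b E' μ j = some e.1 ∧ e.2 = j := by
  unfold greedyStep
  rcases greedyChoice b E' μ j with _ | a
  · simp
  · obtain ⟨e1, e2⟩ := e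
    simp [Prod.ext_iff, eq_comm, or_comm]

theorem filter_fst_greedyStep (b : Fin n → ℕ) (E' μ : Finset (Edge n m)) (j : Fin m)
    (i : Fin n) :
    (greedyStep b E' μ j).filter (·.1 = i) =
      if greedyChoice b E' μ j = some i then insert (i, j) (μ.filter (·.1 = i))
      else μ.filter (·.1 = i) := by
  ext ⟨a, k⟩
  split_ifs with h <;> simp only [mem_filter, mem_insert, mem_greedyStep, Prod.ext_iff] <;>
    grind

theorem deg_greedyStep (hfresh : (i, j) ∉ μ) :
    deg (greedyStep b E' μ j) i = deg μ i + if greedyChoice b E' μ j = some i then 1 else 0 := by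
  unfold deg
  rw [filter_fst_greedyStep]
  split_ifs
  · rw [card_insert_of_notMem (fun h => hfresh (mem_filter.1 h).1)]
  · rfl

theorem util_greedyStep (hfresh : (i, j) ∉ μ) :
    util q i (greedyStep b E' μ j) =
      util q i μ + if greedyChoice b E' μ j = some i then q j else 0 := by
  unfold util
  rw [filter_fst_greedyStep]
  split_ifs
  · rw [sum_insert (fun h => hfresh (mem_filter.1 h).1), add_comm]
  · rw [add_zero]

def AgreeBelow (i : Fin n) (F F' : Finset (Edge n m)) : Prop :=
  ∀ e : Edge n m, e.1 < i → (e ∈ F ↔ e ∈ F')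

theorem AgreeBelow.deg_eq (h : AgreeBelow i μ μ') {a : Fin n} (ha : a < i) :
    deg μ a = deg μ' a := by
  unfold deg
  congr 1
  ext e
  simp only [mem_filter, and_congr_left_iff]
  rintro rfl
  exact h e ha

theorem AgreeBelow.greedyChoice_eq_some_iff_of_lt (hE : AgreeBelow i E E')
    (hμ : AgreeBelow i μ μ') {a : Fin n} (ha : a < i) :
    greedyChoice b E μ j = some a ↔ greedyChoice b E' μ' j = some a := by
  have hbelow : ∀ y ≤ a, ((y, j) ∈ E ∧ deg μ y < b y ↔ (y, j) ∈ E' ∧ deg μ' y < b y) :=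
    fun y hy => by rw [hE (y, j) (hy.trans_lt ha), hμ.deg_eq (hy.trans_lt ha)]
  rw [greedyChoice_eq_some_iff, greedyChoice_eq_some_iff, hbelow a le_rfl]
  exact and_congr_right' (forall₂_congr fun y hy => by rw [hbelow y hy.le])

theorem AgreeBelow.greedyStep (hE : AgreeBelow i E E') (hμ : AgreeBelow i μ μ') :
    AgreeBelow i (greedyStep b E μ j) (greedyStep b E' μ' j) := fun e he => by
  rw [mem_greedyStep, mem_greedyStep, hμ e he, hE.greedyChoice_eq_some_iff_of_lt hμ he]

theorem AgreeBelow.greedyChoice_eq_some_self (hE : AgreeBelow i E E') (hμ : AgreeBelow i μ μ')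
    (hEi : (i, j) ∈ E' → (i, j) ∈ E) (h' : greedyChoice b E' μ' j = some i)
    (hunsat : deg μ i < b i) : greedyChoice b E μ j = some i := by
  refine Fin.find?_eq_some_of_imp h' ?_ fun y hy => ?_
  · simpa using ⟨hEi (greedyChoice_eq_some_iff.1 h').1.1, hunsat⟩
  · simp only [decide_eq_true_eq]
    rw [← hE (y, j) hy, ← hμ.deg_eq hy]
    exact id

/-- `v` stands for the value of the next task to be processed. -/
def Dominates (q : Fin m → ℝ) (i : Fin n) (v : ℝ) (μ μ' : Finset (Edge n m)) : Prop :=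
  AgreeBelow i μ μ' ∧ deg μ' i ≤ deg μ i ∧
    util q i μ' + v * ((deg μ i : ℝ) - deg μ' i) ≤ util q i μ

theorem Dominates.refl (q : Fin m → ℝ) (i : Fin n) (v : ℝ) (μ : Finset (Edge n m)) :
    Dominates q i v μ μ :=
  ⟨fun _ _ => Iff.rfl, le_rfl, by simp⟩

theorem Dominates.anti {v v' : ℝ} (hv : v' ≤ v) (h : Dominates q i v μ μ') :
    Dominates q i v' μ μ' := by
  obtain ⟨hagree, hdeg, hutil⟩ := h
  have : (0 : ℝ) ≤ deg μ i - deg μ' i := sub_nonneg.2 (by exact_mod_cast hdeg)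
  exact ⟨hagree, hdeg, by nlinarith⟩

theorem Dominates.util_le {v : ℝ} (hv : 0 ≤ v) (h : Dominates q i v μ μ') :
    util q i μ' ≤ util q i μ := by
  simpa using (h.anti hv).2.2

theorem Dominates.step (hE : AgreeBelow i E E') (hEi : (i, j) ∈ E' → (i, j) ∈ E)
    (hfresh : (i, j) ∉ μ) (hfresh' : (i, j) ∉ μ') (h : Dominates q i (q j) μ μ') :
    Dominates q i (q j) (greedyStep b E μ j) (greedyStep b E' μ' j) := by
  obtain ⟨hagree, hdeg, hutil⟩ := h
  refine ⟨hE.greedyStep hagree, ?_⟩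
  rw [deg_greedyStep hfresh, deg_greedyStep hfresh', util_greedyStep hfresh,
    util_greedyStep hfresh']
  -- the truthful run can refuse a task the deviating run gives to `i` only if `i` is saturated
  have hahead : greedyChoice b E' μ' j = some i → greedyChoice b E μ j ≠ some i →
      deg μ' i < deg μ i := fun hc' hc =>
    (greedyChoice_eq_some_iff.1 hc').1.2.trans_le
      (not_lt.1 fun hunsat => hc (hE.greedyChoice_eq_some_self hagree hEi hc' hunsat))
  split_ifs with hc' hc hc <;> push_cast
  · exact ⟨by omega, by linarith⟩
  · have := hahead hc' hc
    exact ⟨by omega, by linarith⟩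
  · exact ⟨by omega, by linarith⟩
  · simpa using ⟨hdeg, hutil⟩

theorem Dominates.foldl (hq : ∀ j, 0 ≤ q j) (hE : AgreeBelow i E E')
    (hEi : ∀ j, (i, j) ∈ E' → (i, j) ∈ E) {l : List (Fin m)} (hl : l.Nodup)
    (hsorted : l.Pairwise fun j k => q k ≤ q j) {v : ℝ} (hv : ∀ j ∈ l, q j ≤ v) (hv0 : 0 ≤ v)
    (hfresh : ∀ j ∈ l, (i, j) ∉ μ) (hfresh' : ∀ j ∈ l, (i, j) ∉ μ')
    (h : Dominates q i v μ μ') :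
    util q i (l.foldl (greedyStep b E') μ') ≤ util q i (l.foldl (greedyStep b E) μ) := by
  induction l generalizing μ μ' v with
  | nil => exact h.util_le hv0
  | cons j l ih =>
    rw [List.nodup_cons] at hl
    rw [List.pairwise_cons] at hsorted
    have fresh_step : ∀ {ν F : Finset (Edge n m)}, (∀ k ∈ j :: l, (i, k) ∉ ν) →
        ∀ k ∈ l, (i, k) ∉ greedyStep b F ν j :=
      fun hν k hk hmem => (mem_greedyStep.1 hmem).elim (hν k (List.mem_cons_of_mem j hk))
        fun hc => hl.1 (hc.2 ▸ hk)
    exact ih hl.2 hsorted.2 hsorted.1 (hq j) (fresh_step hfresh) (fresh_step hfresh')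
      ((h.anti (hv j List.mem_cons_self)).step hE (hEi j) (hfresh j List.mem_cons_self)
        (hfresh' j List.mem_cons_self))

theorem util_MAP_le_of_agreeBelow (hq : ∀ j, 0 ≤ q j) (hE : AgreeBelow i E E')
    (hEi : ∀ j, (i, j) ∈ E' → (i, j) ∈ E) : util q i (MAP b q E') ≤ util q i (MAP b q E) := by
  have hnodup : (sortedTasks m q).Nodup :=
    (List.perm_insertionSort _ _).nodup_iff.2 (List.nodup_finRange m)
  have hsorted : (sortedTasks m q).Pairwise fun j k => q k ≤ q j :=
    List.pairwise_insertionSort _ _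
  rw [MAP_eq_foldl, MAP_eq_foldl]
  exact Dominates.foldl hq hE hEi hnodup hsorted
    (fun j _ => single_le_sum (fun k _ => hq k) (mem_univ j)) (sum_nonneg fun k _ => hq k)
    (fun _ _ => notMem_empty _) (fun _ _ => notMem_empty _) (Dominates.refl _ _ _ _)

end Greedy

/-- The greedy mechanism `M_AP` is truthful for agent edge-manipulation:
for every agent, reporting its full true edge set yields utility at least as large as
reporting any nonempty subset of its edges, the other agents' reports being fixed. -/
theorem MAP_truthful (n m : ℕ) (b : Fin n → ℕ) (q : Fin m → ℝ) (hq : ∀ j, 0 < q j)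
    (E : Finset (Edge n m)) (i : Fin n) (S : Finset (Edge n m)) (hS : ValidReport E i S) :
    util q i (MAP b q (deviate E i S)) ≤ util q i (MAP b q E) := by
  have hSi : ∀ e ∈ S, e ∈ E ∧ e.1 = i := fun e he => mem_filter.1 (hS.1 he)
  refine util_MAP_le_of_agreeBelow (fun j => (hq j).le) (fun e he => ?_) (fun j hj => ?_)
  · simp only [deviate, mem_union, mem_filter]
    exact ⟨fun h => Or.inl ⟨h, he.ne⟩, fun h => h.elim And.left fun h => (hSi e h).1⟩
  · simp only [deviate, mem_union, mem_filter] at hj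
    exact hj.elim (fun h => absurd rfl h.2) fun h => (hSi _ h).1
end

section
/- If all tasks have pairwise distinct values, the greedy mechanism M_AP is group strategyproof: no coalition of agents can jointly hide edges so that every coalition member receives utility at least as large as under truthful reporting and at least one member receives strictly larger utility. -/
open Classical

variable {n m : ℕ}

/-!
If no agent's set of tasks changes, nobody gains. Otherwise let `p` be the highest-priority agent
whose set of tasks changes. Agents above `p` are served identically in both runs, so whenever `p`
receives a task under the misreport but not under the truth, `p` was already saturated under the
truth, i.e. had received more tasks there so far. Since tasks arrive in strictly decreasing value,
each such task is outweighed by an earlier, more valuable one, and `p` is strictly worse off. If `p`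
were outside the coalition, its edges would be the same in both graphs and the symmetric argument
would make `p` strictly better off too; so `p` is a coalition member who loses.
-/

open Finset

section RankDominance

variable {ι : Type*} [LinearOrder ι]

def RankDominates (A B : Finset ι) : Prop :=
  ∀ k ∈ B, k ∉ A → #{i ∈ B | i < k} < #{i ∈ A | i < k}

lemma filter_lt_eq_erase_of_forall_lt {S : Finset ι} {a : ι}
    (h : ∀ x ∈ S, x ≠ a → x < a) : {i ∈ S | i < a} = S.erase a := by
  ext x
  simp only [mem_filter, mem_erase]
  exact ⟨fun ⟨hx, hlt⟩ => ⟨hlt.ne, hx⟩, fun ⟨hne, hx⟩ => ⟨hx, h x hx hne⟩⟩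

lemma RankDominates.erase_of_forall_lt {A B : Finset ι} {a : ι} (h : RankDominates A B)
    (hmax : ∀ x ∈ A ∪ B, x ≠ a → x < a) : RankDominates (A.erase a) (B.erase a) := by
  intro k hkB hkA
  have hka : k ≠ a := (mem_erase.1 hkB).1
  have hlt : k < a := hmax k (mem_union_right _ (mem_of_mem_erase hkB)) hka
  have hak : ∀ S : Finset ι, a ∉ {i ∈ S | i < k} := fun S ha => (mem_filter.1 ha).2.asymm hlt
  rw [filter_erase, filter_erase, erase_eq_of_notMem (hak A), erase_eq_of_notMem (hak B)]
  exact h k (mem_of_mem_erase hkB) fun hkA' => hkA (mem_erase.2 ⟨hka, hkA'⟩)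

lemma RankDominates.card_erase_lt_of_forall_lt {A B : Finset ι} {a : ι} (h : RankDominates A B)
    (haB : a ∈ B) (haA : a ∉ A) (hmax : ∀ x ∈ A ∪ B, x ≠ a → x < a) :
    #(B.erase a) < #A := by
  have := h a haB haA
  rwa [filter_lt_eq_erase_of_forall_lt fun x hx => hmax x (mem_union_right _ hx),
    filter_lt_eq_erase_of_forall_lt fun x hx => hmax x (mem_union_left _ hx),
    erase_eq_of_notMem haA] at this

-- `c` bounds the weights of everything processed later, so each surplus element of `A` pays for one
-- such element of `B`.
theorem RankDominates.card_le_and_gap {w : ι → ℝ} {A B : Finset ι} (h : RankDominates A B)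
    (hw : StrictAntiOn w ↑(A ∪ B)) :
    #B ≤ #A ∧ (A ≠ B → ∀ c, (∀ k ∈ A ∪ B, c < w k) →
      (#A - #B : ℝ) * c < ∑ k ∈ A, w k - ∑ k ∈ B, w k) := by
  generalize hU : A ∪ B = U at hw
  induction U using Finset.induction_on_max generalizing A B with
  | empty =>
    obtain ⟨rfl, rfl⟩ := union_eq_empty.1 hU
    simp
  | insert a s hs ih =>
    have has : a ∉ s := fun ha => (hs a ha).false
    have hmax : ∀ x ∈ A ∪ B, x ≠ a → x < a := fun x hx hxa =>
      hs x ((mem_insert.1 (hU ▸ hx)).resolve_left hxa)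
    have hU' : A.erase a ∪ B.erase a = s := by
      rw [← erase_union_distrib, hU, erase_insert has]
    obtain ⟨hcard, hgap⟩ := ih (h.erase_of_forall_lt hmax) hU' (hw.mono (subset_insert a s))
    by_cases haA : a ∈ A <;> by_cases haB : a ∈ B
    · have hcA := card_erase_add_one haA
      have hcB := card_erase_add_one haB
      have hsA := sum_erase_add A w haA
      have hsB := sum_erase_add B w haB
      refine ⟨by omega, fun hne c hc => ?_⟩
      have hne' : A.erase a ≠ B.erase a := fun he =>
        hne (by rw [← insert_erase haA, ← insert_erase haB, he])
      have := hgap hne' c fun k hk => hc k (mem_insert_of_mem hk)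
      rw [← hcA, ← hcB, ← hsA, ← hsB]
      push_cast
      linarith
    · have hcA := card_erase_add_one haA
      have hsA := sum_erase_add A w haA
      rw [erase_eq_of_notMem haB] at hcard hgap
      refine ⟨by omega, fun _ c hc => ?_⟩
      have hca : c < w a := hc a (mem_insert_self a s)
      rw [← hcA, ← hsA]
      push_cast
      by_cases he : A.erase a = B
      · rw [he]
        linarith
      · have := hgap he c fun k hk => hc k (mem_insert_of_mem hk)
        linarith
    · rw [erase_eq_of_notMem haA] at hcard hgap
      have hcB := card_erase_add_one haB
      have hsB := sum_erase_add B w haB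
      have hlt := h.card_erase_lt_of_forall_lt haB haA hmax
      refine ⟨by omega, fun _ c hc => ?_⟩
      have hwa : ∀ k ∈ s, w a < w k := fun k hk =>
        hw (mem_insert_of_mem hk) (mem_insert_self a s) (hs k hk)
      have hgap_a := hgap (fun he => hlt.ne (by rw [he])) (w a) hwa
      have hca : c < w a := hc a (mem_insert_self a s)
      have hlt' : (#(B.erase a) : ℝ) + 1 ≤ #A := by exact_mod_cast hlt
      rw [← hcB, ← hsB]
      push_cast
      nlinarith
    · exact absurd (hU ▸ mem_insert_self a s) (by simp [haA, haB])

theorem RankDominates.sum_lt_sum {w : ι → ℝ} {A B : Finset ι} (h : RankDominates A B)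
    (hne : A ≠ B) (hw : StrictAntiOn w ↑(A ∪ B)) (hpos : ∀ k ∈ A ∪ B, 0 < w k) :
    ∑ k ∈ B, w k < ∑ k ∈ A, w k := by
  have := (h.card_le_and_gap hw).2 hne 0 hpos
  rwa [mul_zero, sub_pos] at this

end RankDominance

namespace Greedy

variable (b : Fin n → ℕ) (G : Finset (Edge n m))

noncomputable def pick (μ : Finset (Edge n m)) (j : Fin m) : Option (Fin n) :=
  (List.finRange n).find? fun i => decide ((i, j) ∈ G ∧ deg μ i < b i)

noncomputable def step (μ : Finset (Edge n m)) (j : Fin m) : Finset (Edge n m) :=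
  match pick b G μ j with
  | some i => insert (i, j) μ
  | none => μ

noncomputable def run (L : List (Fin m)) (k : ℕ) : Finset (Edge n m) :=
  (L.take k).foldl (step b G) ∅

-- Tasks are referred to by their position in `L`, so that `RankDominates` compares processing times.
noncomputable def recipient (L : List (Fin m)) (k : Fin L.length) : Option (Fin n) :=
  pick b G (run b G L k) L[k]

noncomputable def assigned (L : List (Fin m)) (i : Fin n) : Finset (Fin L.length) :=
  {k | recipient b G L k = some i}

variable {b G}

lemma pick_spec {μ : Finset (Edge n m)} {j : Fin m} {i : Fin n} (h : pick b G μ j = some i) :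
    (i, j) ∈ G ∧ deg μ i < b i := by
  simpa using List.find?_some h

lemma exists_pick_le {μ : Finset (Edge n m)} {j : Fin m} {i : Fin n} (hG : (i, j) ∈ G)
    (hi : deg μ i < b i) : ∃ i', pick b G μ j = some i' ∧ i' ≤ i := by
  rcases h : pick b G μ j with _ | i'
  · exact absurd (List.find?_eq_none.1 h i (List.mem_finRange i)) (by simpa using ⟨hG, hi⟩)
  · refine ⟨i', rfl, not_lt.1 fun hlt => ?_⟩
    obtain ⟨-, k, hk, rfl, hbefore⟩ := List.find?_eq_some_iff_getElem.1 h
    have := hbefore i (by simpa [Fin.lt_def] using hlt)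
    simp_all

lemma deg_lt_deg_of_pick_eq_some {G' μ μ' : Finset (Edge n m)} {j : Fin m} {p : Fin n}
    (h' : pick b G' μ' j = some p) (hG : (p, j) ∈ G) (hne : pick b G μ j ≠ some p)
    (habove : ∀ i < p, pick b G μ j ≠ some i) : deg μ' p < deg μ p := by
  refine (pick_spec h').2.trans_le (not_lt.1 fun hunsat => ?_)
  obtain ⟨i, hi, hip⟩ := exists_pick_le hG hunsat
  rcases hip.lt_or_eq with hlt | rfl
  exacts [habove i hlt hi, hne hi]

lemma run_succ {L : List (Fin m)} {k : ℕ} (hk : k < L.length) :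
    run b G L (k + 1) = step b G (run b G L k) L[k] := by
  rw [run, List.take_add_one, List.getElem?_eq_getElem hk, Option.toList_some,
    List.foldl_append, List.foldl_cons, List.foldl_nil, run]

lemma run_of_length_le {L : List (Fin m)} {k : ℕ} (hk : L.length ≤ k) :
    run b G L k = run b G L L.length := by
  rw [run, run, List.take_of_length_le hk, List.take_length]

lemma mem_run {L : List (Fin m)} {k : ℕ} {e : Edge n m} :
    e ∈ run b G L k ↔
      ∃ k' : Fin L.length, k' < k ∧ recipient b G L k' = some e.1 ∧ L[k'] = e.2 := by
  induction k with
  | zero => simp [run]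
  | succ k ih =>
    by_cases hk : k < L.length
    · have hsplit : ∀ P : Fin L.length → Prop, (∃ k' : Fin L.length, k' < k + 1 ∧ P k') ↔
          (∃ k' : Fin L.length, k' < k ∧ P k') ∨ P ⟨k, hk⟩ := fun P =>
        ⟨fun ⟨k', hk', hP⟩ => (Nat.lt_succ_iff_lt_or_eq.1 hk').imp (⟨k', ·, hP⟩)
          fun h => (Fin.ext h : k' = ⟨k, hk⟩) ▸ hP,
         fun h => h.elim (fun ⟨k', hk', hP⟩ => ⟨k', by omega, hP⟩)
          (⟨_, k.lt_succ_self, ·⟩)⟩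
      rw [hsplit fun k' => recipient b G L k' = some e.1 ∧ L[k'] = e.2, ← ih, run_succ hk]
      change e ∈ step b G _ _ ↔ _ ∨ pick b G (run b G L k) L[k] = some e.1 ∧ L[k] = e.2
      unfold step
      rcases pick b G (run b G L k) L[k] with _ | i
      · simp
      · simp [Prod.ext_iff, eq_comm, or_comm]
    · rw [run_of_length_le (by omega), ← run_of_length_le (not_lt.1 hk), ih]
      exact exists_congr fun k' => and_congr_left' (by omega)

lemma filter_run_eq_image (L : List (Fin m)) (k : ℕ) (i : Fin n) :
    (run b G L k).filter (fun e => e.1 = i) =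
      {k' ∈ assigned b G L i | k'.val < k}.image fun k' => (i, L[k']) := by
  ext ⟨i', j⟩
  simp only [mem_filter, mem_run, mem_image, assigned, mem_univ, true_and, Prod.ext_iff]
  constructor
  · rintro ⟨⟨k', hk', hr, hj⟩, rfl⟩
    exact ⟨k', ⟨hr, hk'⟩, rfl, hj⟩
  · rintro ⟨k', ⟨hr, hk'⟩, rfl, hj⟩
    exact ⟨⟨k', hk', hr, hj⟩, rfl⟩

lemma injective_getElem_of_nodup {L : List (Fin m)} (hL : L.Nodup) (i : Fin n) :
    Function.Injective fun k : Fin L.length => (i, L[k]) :=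
  fun _ _ h => List.nodup_iff_injective_get.1 hL (Prod.ext_iff.1 h).2

lemma deg_run {L : List (Fin m)} (hL : L.Nodup) (k : Fin L.length) (i : Fin n) :
    deg (run b G L k) i = #{k' ∈ assigned b G L i | k' < k} := by
  rw [deg, filter_run_eq_image, card_image_of_injective _ (injective_getElem_of_nodup hL i)]
  rfl

lemma nodup_sortedTasks (q : Fin m → ℝ) : (sortedTasks m q).Nodup :=
  (List.perm_insertionSort _ _).nodup_iff.2 (List.nodup_finRange m)

lemma strictAnti_sortedTasks {q : Fin m → ℝ} (hq : Function.Injective q) :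
    StrictAnti fun k : Fin (sortedTasks m q).length => q (sortedTasks m q)[k] := by
  intro k k' hlt
  have hsorted : (sortedTasks m q).Pairwise fun j j' => q j' ≤ q j := by
    have : Std.Total fun j j' : Fin m => q j' ≤ q j := ⟨fun j j' => le_total (q j') (q j)⟩
    have : IsTrans (Fin m) fun j j' => q j' ≤ q j := ⟨fun _ _ _ h h' => h'.trans h⟩
    exact List.pairwise_insertionSort _ _
  refine (List.pairwise_iff_getElem.1 hsorted k k' k.2 k'.2 hlt).lt_of_ne fun heq => hlt.ne ?_
  exact List.nodup_iff_injective_get.1 (nodup_sortedTasks q) (hq heq).symm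

lemma MAP_eq_run (q : Fin m → ℝ) :
    MAP b q G = run b G (sortedTasks m q) (sortedTasks m q).length := by
  rw [run, List.take_length]
  rfl

lemma util_MAP (q : Fin m → ℝ) (i : Fin n) :
    util q i (MAP b q G) = ∑ k ∈ assigned b G (sortedTasks m q) i, q (sortedTasks m q)[k] := by
  rw [util, MAP_eq_run, filter_run_eq_image,
    sum_image (injective_getElem_of_nodup (nodup_sortedTasks q) i).injOn,
    filter_true_of_mem fun k _ => k.2]

theorem rankDominates_assigned {G' : Finset (Edge n m)} {L : List (Fin m)} (hL : L.Nodup)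
    {p : Fin n} (hedges : ∀ j, (p, j) ∈ G' → (p, j) ∈ G)
    (habove : ∀ i < p, assigned b G L i = assigned b G' L i) :
    RankDominates (assigned b G L p) (assigned b G' L p) := by
  intro k hkG' hkG
  simp only [assigned, mem_filter, mem_univ, true_and] at hkG' hkG
  rw [← deg_run hL, ← deg_run hL]
  refine deg_lt_deg_of_pick_eq_some hkG' (hedges _ (pick_spec hkG').1) hkG fun i hi hpick => ?_
  have hki : k ∈ assigned b G L i := mem_filter.2 ⟨mem_univ k, hpick⟩
  rw [habove i hi, assigned, mem_filter] at hki
  exact hi.ne' (Option.some_injective _ (hkG'.symm.trans hki.2))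

theorem util_MAP_lt_of_first_change {G' : Finset (Edge n m)} {q : Fin m → ℝ}
    (hq : ∀ j, 0 < q j) (hinj : Function.Injective q) {p : Fin n}
    (hedges : ∀ j, (p, j) ∈ G' → (p, j) ∈ G)
    (habove : ∀ i < p, assigned b G (sortedTasks m q) i = assigned b G' (sortedTasks m q) i)
    (hne : assigned b G (sortedTasks m q) p ≠ assigned b G' (sortedTasks m q) p) :
    util q p (MAP b q G') < util q p (MAP b q G) := by
  rw [util_MAP, util_MAP]
  exact (rankDominates_assigned (nodup_sortedTasks q) hedges habove).sum_lt_sum hne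
    ((strictAnti_sortedTasks hinj).strictAntiOn _) fun k _ => hq _

end Greedy

open Greedy in
/-- If all tasks have pairwise distinct values, `M_AP` is group
strategyproof: no coalition `C` of agents can jointly hide edges (agents outside `C`
reporting truthfully) so that every coalition member's utility weakly increases and some
member's utility strictly increases. -/
theorem MAP_group_strategyproof (n m : ℕ) (b : Fin n → ℕ) (q : Fin m → ℝ)
    (hq : ∀ j, 0 < q j) (hdist : Function.Injective q) (E : Finset (Edge n m)) :
    ¬ ∃ (C : Finset (Fin n)) (D : Fin n → Finset (Edge n m)),
        (∀ i, ValidReport E i (D i)) ∧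
        (∀ i ∉ C, D i = agentEdges E i) ∧
        (∀ i ∈ C,
          util q i (MAP b q E) ≤ util q i (MAP b q (Finset.univ.biUnion D))) ∧
        (∃ i ∈ C,
          util q i (MAP b q E) < util q i (MAP b q (Finset.univ.biUnion D))) := by
  rintro ⟨C, D, hvalid, htruth, hweak, g, -, hgain⟩
  set E' := Finset.univ.biUnion D
  set L := sortedTasks m q
  have hhidden : ∀ i j, (i, j) ∈ E' → (i, j) ∈ E := fun i j h => by
    obtain ⟨i', -, h⟩ := Finset.mem_biUnion.1 h
    exact Finset.filter_subset _ E ((hvalid i').1 h)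
  have htruthful : ∀ i ∉ C, ∀ j, (i, j) ∈ E → (i, j) ∈ E' := fun i hi j h =>
    Finset.mem_biUnion.2
      ⟨i, Finset.mem_univ i, htruth i hi ▸ Finset.mem_filter.2 ⟨h, rfl⟩⟩
  by_cases hsame : ∀ i, assigned b E L i = assigned b E' L i
  · rw [util_MAP, util_MAP, hsame] at hgain
    exact hgain.false
  obtain ⟨p, hp, hmin⟩ :=
    wellFounded_lt.has_min {i | assigned b E L i ≠ assigned b E' L i} (not_forall.1 hsame)
  have habove : ∀ i < p, assigned b E L i = assigned b E' L i := fun i hi =>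
    not_not.1 fun h => hmin i h hi
  have hloss : util q p (MAP b q E') < util q p (MAP b q E) :=
    util_MAP_lt_of_first_change hq hdist (hhidden p) habove hp
  have hpC : p ∈ C := by
    by_contra hpC
    exact hloss.asymm <| util_MAP_lt_of_first_change hq hdist (htruthful p hpC)
      (fun i hi => (habove i hi).symm) (Ne.symm hp)
  exact (hweak p hpC).not_gt hloss
end

section
/- Under any maximum-weight b-matching mechanism induced by the augmenting-path algorithm (with BFS or DFS), an agent who is assigned no task under truthful reporting cannot obtain positive utility by hiding any subset of its edges: if agent a_k is unmatched in the output on edge set E, then for every E' obtained from E by deleting a subset of a_k's edges, the mechanism's output on E' also leaves a_k unmatched. -/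
open Classical

variable {n m : ℕ}

/-! An agent that is unmatched at the end of the run was unmatched at every step, because
flipping an augmenting path never unmatches an agent the path does not pass through. So every
path flipped on the truthful graph avoids the agent and lies in the deviated graph, which is a
subgraph. Both the BFS and the DFS cost are injective on paths of length at most `n`, so the
cost-minimal augmenting path is unique; it is therefore selected on the deviated graph as well,
and the two runs produce the same matching. -/

lemma foldl_mul_add_eq_ofDigits_reverse (B : ℕ) (l : List ℕ) :
    l.foldl (fun a d => a * B + d) 0 = Nat.ofDigits B l.reverse := by
  rw [List.foldl_eq_foldr_reverse]
  induction l.reverse with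
  | nil => rfl
  | cons d t ih => rw [List.foldr_cons, ih, Nat.ofDigits_cons]; ring

/-- The digits of a path: agent and task of each edge, shifted by one so that
no digit is zero and the zero padding of `pathKey` can be stripped off. -/
def edgeDigits (p : List (Edge n m)) : List ℕ :=
  p.flatMap fun e => [e.1.val + 1, e.2.val + 1]

def pathDigits (n m : ℕ) (p : List (Edge n m)) : List ℕ :=
  edgeDigits p ++ List.replicate (2 * n - 2 * p.length) 0

lemma edgeDigits_injective : Function.Injective (edgeDigits (n := n) (m := m)) := by
  intro p p' h
  induction p generalizing p' with
  | nil => cases p' <;> simp_all [edgeDigits]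
  | cons e t ih =>
    cases p' with
    | nil => simp [edgeDigits] at h
    | cons e' t' =>
      simp only [edgeDigits, List.flatMap_cons, List.cons_append, List.nil_append,
        List.cons.injEq, add_left_inj] at h
      obtain ⟨h₁, h₂, h₃⟩ := h
      rw [Prod.ext (Fin.ext h₁) (Fin.ext h₂), ih h₃]

lemma filter_ne_zero_pathDigits (p : List (Edge n m)) :
    (pathDigits n m p).filter (· ≠ 0) = edgeDigits p := by
  rw [pathDigits, List.filter_append, List.filter_eq_self.2, List.filter_eq_nil_iff.2,
    List.append_nil]
  · intro d hd
    simp [List.eq_of_mem_replicate hd]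
  · intro d hd
    obtain ⟨e, -, hd⟩ := List.mem_flatMap.1 hd
    simp only [List.mem_cons, List.not_mem_nil, or_false] at hd
    rcases hd with rfl | rfl <;> simp

lemma pathDigits_injective : Function.Injective (pathDigits n m) := fun p p' h =>
  edgeDigits_injective (by rw [← filter_ne_zero_pathDigits, h, filter_ne_zero_pathDigits])

lemma length_pathDigits {p : List (Edge n m)} (hp : p.length ≤ n) :
    (pathDigits n m p).length = 2 * n := by
  have : (edgeDigits p).length = 2 * p.length := by
    induction p with
    | nil => rfl
    | cons e t ih => simp [edgeDigits] at ih ⊢; omega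
  simp only [pathDigits, List.length_append, this, List.length_replicate]
  omega

lemma pathDigits_lt (p : List (Edge n m)) : ∀ d ∈ pathDigits n m p, d < n + m + 2 := by
  simp only [pathDigits, edgeDigits, List.mem_append, List.mem_flatMap, List.mem_cons,
    List.mem_replicate]
  rintro d (⟨e, -, rfl | rfl | h⟩ | ⟨-, rfl⟩) <;> simp_all <;> omega

lemma pathKey_eq_ofDigits (p : List (Edge n m)) :
    pathKey n m p = Nat.ofDigits (n + m + 2) (pathDigits n m p).reverse :=
  foldl_mul_add_eq_ofDigits_reverse _ _

lemma pathKey_lt {p : List (Edge n m)} (hp : p.length ≤ n) :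
    pathKey n m p < (n + m + 2) ^ (2 * n + 2) := by
  rw [pathKey_eq_ofDigits]
  calc _ < (n + m + 2) ^ (pathDigits n m p).reverse.length :=
        Nat.ofDigits_lt_base_pow_length (by omega) (by simpa using pathDigits_lt p)
    _ ≤ _ := Nat.pow_le_pow_right (by omega) (by simp [length_pathDigits hp])

lemma pathKey_injOn : Set.InjOn (pathKey n m) {p | p.length ≤ n} := by
  intro p hp p' hp' h
  rw [pathKey_eq_ofDigits, pathKey_eq_ofDigits] at h
  refine pathDigits_injective (List.reverse_injective
    (Nat.ofDigits_inj_of_len_eq (by omega) ?_ ?_ ?_ h))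
  · simp [length_pathDigits hp, length_pathDigits hp']
  · simpa using pathDigits_lt p
  · simpa using pathDigits_lt p'

lemma dfsCost_injOn : Set.InjOn (dfsCost n m) {p | p.length ≤ n} := pathKey_injOn

lemma bfsCost_injOn : Set.InjOn (bfsCost n m) {p | p.length ≤ n} := by
  intro p hp p' hp' h
  have hmod := congrArg (· % (n + m + 2) ^ (2 * n + 2)) h
  simp only [bfsCost, Nat.mul_add_mod_of_lt (pathKey_lt hp),
    Nat.mul_add_mod_of_lt (pathKey_lt hp')] at hmod
  exact pathKey_injOn hp hp' hmod

lemma deg_eq_zero_iff {μ : Finset (Edge n m)} {i : Fin n} :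
    deg μ i = 0 ↔ ∀ e ∈ μ, e.1 ≠ i := by
  simp [deg, Finset.filter_eq_empty_iff]

lemma exists_mem_of_mem_pathMatched {p : List (Edge n m)} {e : Edge n m}
    (he : e ∈ pathMatched p) : ∃ e' ∈ p, e'.1 = e.1 := by
  obtain ⟨⟨e₁, e₂⟩, hmem, rfl⟩ := List.mem_map.1 he
  exact ⟨e₁, (List.of_mem_zip hmem).1, rfl⟩

lemma deg_applyPath_eq_zero {μ : Finset (Edge n m)} {p : List (Edge n m)} {i : Fin n}
    (h : deg (applyPath μ p) i = 0) : deg μ i = 0 ∧ ∀ e ∈ p, e.1 ≠ i := by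
  rw [deg_eq_zero_iff] at h ⊢
  have hp : ∀ e ∈ p, e.1 ≠ i := fun e he =>
    h e (Finset.mem_union_right _ (List.mem_toFinset.2 he))
  refine ⟨fun e he hei => h e (Finset.mem_union_left _ (Finset.mem_sdiff.2 ⟨he, ?_⟩)) hei,
    hp⟩
  intro hm
  obtain ⟨e', he', he'e⟩ := exists_mem_of_mem_pathMatched (List.mem_toFinset.1 hm)
  exact hp e' he' (he'e.trans hei)

namespace IsAugPathFrom

variable {b : Fin n → ℕ} {E₁ E₂ μ : Finset (Edge n m)} {j : Fin m} {p : List (Edge n m)}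

lemma length_le (h : IsAugPathFrom b E₁ μ j p) : p.length ≤ n := by
  simpa using h.agentsNodup.length_le_card

lemma mono (hE : E₁ ⊆ E₂) (h : IsAugPathFrom b E₁ μ j p) : IsAugPathFrom b E₂ μ j p :=
  { h with mem := fun e he => ⟨hE (h.mem e he).1, (h.mem e he).2⟩ }

lemma of_forall_mem (h : IsAugPathFrom b E₂ μ j p) (hp : ∀ e ∈ p, e ∈ E₁) :
    IsAugPathFrom b E₁ μ j p :=
  { h with mem := fun e he => ⟨hp e he, (h.mem e he).2⟩ }

end IsAugPathFrom

section selectPath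

variable {cost : List (Edge n m) → ℕ} {b : Fin n → ℕ} {E₁ E₂ μ : Finset (Edge n m)}
  {j : Fin m} {p : List (Edge n m)}

lemma selectPath_eq_none_iff :
    selectPath cost b E₁ μ j = none ↔ ∀ p, ¬ IsAugPathFrom b E₁ μ j p := by
  rw [selectPath, dite_eq_right_iff]
  simp only [reduceCtorEq, imp_false, not_exists, not_and]
  refine ⟨fun h p hp => ?_, fun h p hp _ => h p hp⟩
  have hcost : ∃ c p, IsAugPathFrom b E₁ μ j p ∧ cost p = c := ⟨cost p, p, hp, rfl⟩
  obtain ⟨p₀, hp₀, hmin⟩ := Nat.find_spec hcost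
  exact h p₀ hp₀ fun p' hp' => hmin ▸ Nat.find_min' hcost ⟨p', hp', rfl⟩

lemma selectPath_eq_some (h : selectPath cost b E₁ μ j = some p) :
    IsAugPathFrom b E₁ μ j p ∧
      ∀ p', IsAugPathFrom b E₁ μ j p' → cost p ≤ cost p' := by
  unfold selectPath at h
  split_ifs at h with hex
  exact Option.some_injective _ h ▸ hex.choose_spec

lemma selectPath_eq_of_subset (hinj : Set.InjOn cost {p | p.length ≤ n}) (hE : E₁ ⊆ E₂)
    (h : ∀ p, selectPath cost b E₂ μ j = some p → IsAugPathFrom b E₁ μ j p) :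
    selectPath cost b E₁ μ j = selectPath cost b E₂ μ j := by
  cases h₂ : selectPath cost b E₂ μ j with
  | none =>
    rw [selectPath_eq_none_iff] at h₂ ⊢
    exact fun p hp => h₂ p (hp.mono hE)
  | some p =>
    obtain ⟨hp₂, hmin₂⟩ := selectPath_eq_some h₂
    have hp₁ := h p h₂
    cases h₁ : selectPath cost b E₁ μ j with
    | none => exact absurd hp₁ (selectPath_eq_none_iff.1 h₁ p)
    | some p' =>
      obtain ⟨hp'₁, hmin₁⟩ := selectPath_eq_some h₁
      exact congrArg some <| hinj hp'₁.length_le hp₂.length_le <|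
        le_antisymm (hmin₁ p hp₁) (hmin₂ p' (hp'₁.mono hE))

end selectPath

lemma List.foldl_congr_of_backward_closed {σ α : Type*} {f g : σ → α → σ} {Q : σ → Prop}
    (hQ : ∀ s a, Q (f s a) → Q s) (hfg : ∀ s a, Q (f s a) → g s a = f s a) :
    ∀ (l : List α) (s : σ), Q (l.foldl f s) → l.foldl g s = l.foldl f s := by
  have hQfold : ∀ (l : List α) s, Q (l.foldl f s) → Q s := fun l => by
    induction l with
    | nil => exact fun _ h => h
    | cons a t ih => exact fun s h => hQ s a (ih _ h)
  intro l
  induction l with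
  | nil => exact fun _ _ => rfl
  | cons a t ih =>
    intro s h
    rw [List.foldl_cons, List.foldl_cons, hfg s a (hQfold t _ h), ih _ h]

noncomputable def augStep (cost : List (Edge n m) → ℕ) (b : Fin n → ℕ)
    (E' μ : Finset (Edge n m)) (j : Fin m) : Finset (Edge n m) :=
  match selectPath cost b E' μ j with
  | some p => applyPath μ p
  | none => μ

lemma runAug_eq_foldl_augStep (cost : List (Edge n m) → ℕ) (b : Fin n → ℕ)
    (q : Fin m → ℝ) (E' : Finset (Edge n m)) :
    runAug cost b q E' = (sortedTasks m q).foldl (augStep cost b E') ∅ := rfl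

section augStep

variable {cost : List (Edge n m) → ℕ} {b : Fin n → ℕ} {E S μ : Finset (Edge n m)}
  {i : Fin n} {j : Fin m}

lemma deg_augStep_eq_zero (h : deg (augStep cost b E μ j) i = 0) :
    deg μ i = 0 ∧ ∀ p, selectPath cost b E μ j = some p → ∀ e ∈ p, e.1 ≠ i := by
  unfold augStep at h
  cases hsel : selectPath cost b E μ j with
  | none => rw [hsel] at h; exact ⟨h, by simp⟩
  | some p =>
    rw [hsel] at h
    obtain ⟨hμ, hp⟩ := deg_applyPath_eq_zero h
    exact ⟨hμ, fun p' hp' => Option.some_injective _ hp' ▸ hp⟩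

lemma deviate_subset (hS : S ⊆ agentEdges E i) : deviate E i S ⊆ E :=
  Finset.union_subset (Finset.filter_subset _ _) (hS.trans (Finset.filter_subset _ _))

lemma augStep_deviate (hinj : Set.InjOn cost {p | p.length ≤ n}) (hS : S ⊆ agentEdges E i)
    (h : deg (augStep cost b E μ j) i = 0) :
    augStep cost b (deviate E i S) μ j = augStep cost b E μ j := by
  have hsel : selectPath cost b (deviate E i S) μ j = selectPath cost b E μ j := by
    refine selectPath_eq_of_subset hinj (deviate_subset hS) fun p hp =>
      (selectPath_eq_some hp).1.of_forall_mem fun e he => ?_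
    exact Finset.mem_union_left _ <| Finset.mem_filter.2
      ⟨((selectPath_eq_some hp).1.mem e he).1, (deg_augStep_eq_zero h).2 p hp e he⟩
  simp only [augStep, hsel]

lemma runAug_deviate (hinj : Set.InjOn cost {p | p.length ≤ n}) (hS : S ⊆ agentEdges E i)
    {q : Fin m → ℝ} (h : deg (runAug cost b q E) i = 0) :
    runAug cost b q (deviate E i S) = runAug cost b q E := by
  rw [runAug_eq_foldl_augStep] at h ⊢
  exact List.foldl_congr_of_backward_closed (Q := fun μ => deg μ i = 0)
    (fun _ _ h => (deg_augStep_eq_zero h).1) (fun _ _ => augStep_deviate hinj hS) _ _ h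

end augStep

theorem unmatched_agent_cannot_gain_general (n m : ℕ) (b : Fin n → ℕ) (q : Fin m → ℝ)
    (E : Finset (Edge n m)) (i : Fin n) (S : Finset (Edge n m))
    (hS : S ⊆ agentEdges E i) :
    (deg (MBFS b q E) i = 0 → deg (MBFS b q (deviate E i S)) i = 0) ∧
    (deg (MDFS b q E) i = 0 → deg (MDFS b q (deviate E i S)) i = 0) := by
  refine ⟨fun h => ?_, fun h => ?_⟩
  · rwa [MBFS, runAug_deviate bfsCost_injOn hS h]
  · rwa [MDFS, runAug_deviate dfsCost_injOn hS h]

/-- Under the maximum-weight b-matching mechanisms induced by the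
augmenting-path algorithm with BFS or DFS, an agent assigned no task under truthful
reporting cannot become matched by hiding any subset of its edges: if agent `i` is unmatched
in the output on the true edge set `E`, then for every edge set obtained from `E` by deleting
a subset of `i`'s edges, the output still leaves `i` unmatched. -/
theorem unmatched_agent_cannot_gain (n m : ℕ) (b : Fin n → ℕ) (q : Fin m → ℝ)
    (hq : ∀ j, 0 < q j) (E : Finset (Edge n m)) (i : Fin n) (S : Finset (Edge n m))
    (hS : S ⊆ agentEdges E i) :
    (deg (MBFS b q E) i = 0 → deg (MBFS b q (deviate E i S)) i = 0) ∧
    (deg (MDFS b q E) i = 0 → deg (MDFS b q (deviate E i S)) i = 0) :=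
  unmatched_agent_cannot_gain_general n m b q E i S hS
end

section
/- On every instance, the matching returned by the greedy mechanism M_AP equals the union of the agents' FCFS policies: M_AP assigns to each agent a_i exactly the task set B_i, where B_i consists of a_i's top b_i valued tasks among those remaining after removing B_1, …, B_{i−1}. -/
open Classical

variable {n m : ℕ}

open Classical in
/-- The top `k` valued tasks (ties broken by index) among a set `c` of tasks. -/
noncomputable def topTasks (q : Fin m → ℝ) (c : Finset (Fin m)) (k : ℕ) : Finset (Fin m) :=
  ((List.insertionSort (fun j j' => q j' ≤ q j)
    ((List.finRange m).filter (fun j => decide (j ∈ c)))).take k).toFinset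

/-- `remTasks b q E k` is the set `T⁽ᵏ⁾` of tasks remaining after the first `k` agents took
their FCFS shares: `T⁽⁰⁾ = T` and `T⁽ⁱ⁾ = T⁽ⁱ⁻¹⁾ \ Bᵢ`. -/
noncomputable def remTasks (b : Fin n → ℕ) (q : Fin m → ℝ) (E : Finset (Edge n m)) :
    ℕ → Finset (Fin m)
  | 0 => Finset.univ
  | k + 1 =>
    if h : k < n then
      remTasks b q E k \
        topTasks q ((remTasks b q E k).filter (fun j => (⟨k, h⟩, j) ∈ E)) (b ⟨k, h⟩)
    else remTasks b q E k

/-- The First-Come-First-Served policy of agent `i`: report only the edges to its top `b i`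
valued tasks among those remaining after the higher-priority agents' FCFS policies. -/
noncomputable def FCFSP (b : Fin n → ℕ) (q : Fin m → ℝ) (E : Finset (Edge n m)) (i : Fin n) :
    Finset (Edge n m) :=
  (topTasks q ((remTasks b q E i.val).filter (fun j => (i, j) ∈ E)) (b i)).image
    (fun j => (i, j))

/-- The union of all agents' FCFS policies. -/
noncomputable def FCFSunion (b : Fin n → ℕ) (q : Fin m → ℝ) (E : Finset (Edge n m)) :
    Finset (Edge n m) :=
  Finset.univ.biUnion (FCFSP b q E)

/-! Both `MAP` and the FCFS sets read tasks in the same stable value order, so "the top `bᵢ`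
tasks of a set" means "its first `bᵢ` tasks in processing order". By induction along that
order, after processing a prefix of the tasks `MAP` has chosen exactly the FCFS edges to tasks
of the prefix. When task `j` comes, let `k` be the agent with `j ∈ B_k`, if any. An agent
`i < k` connected to `j` still had `j` available but left it out of `Bᵢ`, so `Bᵢ` is full and
lies in the prefix: `i` is saturated. Agent `k` has received only part of `B_k` (not `j`), so it
is not, and `MAP` gives `j` to `k`. If there is no such `k`, the same argument saturates every
agent connected to `j`, and `j` stays unassigned. -/

namespace List

variable {α : Type*} (r : α → α → Prop) [DecidableRel r]

theorem filter_orderedInsert [IsTrans α r] (p : α → Bool) (a : α) {l : List α}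
    (hl : l.Pairwise r) :
    (l.orderedInsert r a).filter p =
      if p a then (l.filter p).orderedInsert r a else l.filter p := by
  induction l with
  | nil => by_cases hpa : p a <;> simp [hpa]
  | cons b l ih =>
    rw [pairwise_cons] at hl
    by_cases hab : r a b
    · have hle : ∀ c ∈ (b :: l).filter p, r a c := fun c hc => by
        rcases mem_cons.mp (mem_of_mem_filter hc) with rfl | hc
        · exact hab
        · exact _root_.trans hab (hl.1 c hc)
      cases hpa : p a
      · simp [orderedInsert_cons_of_le _ _ hab, hpa]
      · rw [orderedInsert_cons_of_le _ _ hab, filter_cons_of_pos hpa, if_pos rfl]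
        cases h : (b :: l).filter p with
        | nil => rfl
        | cons c t => rw [orderedInsert_cons_of_le _ _ (hle c (by simp [h]))]
    · rw [orderedInsert_of_not_le _ _ hab, filter_cons, filter_cons, ih hl.2]
      by_cases hpb : p b <;> by_cases hpa : p a <;> simp [hpa, hpb, hab]

theorem filter_insertionSort [Std.Total r] [IsTrans α r] (p : α → Bool) (l : List α) :
    (l.insertionSort r).filter p = (l.filter p).insertionSort r := by
  induction l with
  | nil => rfl
  | cons a l ih =>
    rw [insertionSort_cons, filter_orderedInsert r p a (pairwise_insertionSort r l), ih,
      filter_cons]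
    split <;> simp

theorem find?_finRange_eq_some_iff {n : ℕ} {p : Fin n → Bool} {k : Fin n} :
    (finRange n).find? p = some k ↔ p k ∧ ∀ i < k, p i = false := by
  rw [find?_eq_some_iff_getElem]
  constructor
  · rintro ⟨hk, i, hi, rfl, hlt⟩
    refine ⟨hk, fun j hj => ?_⟩
    simpa using hlt j.val (by simpa [Fin.lt_def] using hj)
  · rintro ⟨hk, hlt⟩
    refine ⟨hk, k.val, by simp, by simp, fun j hj => ?_⟩
    simpa using hlt ⟨j, hj.trans k.isLt⟩ hj

theorem take_filter_sublist_take {l : List α} (p : α → Bool) {t k : ℕ} (ht : t < l.length)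
    (hp : p l[t]) (hk : l[t] ∉ (l.filter p).take k) :
    (l.filter p).take k <+ l.take t ∧ ((l.filter p).take k).length = k := by
  set a := (l.take t).filter p
  have hsplit : l.filter p = a ++ l[t] :: (l.drop (t + 1)).filter p := by
    conv_lhs => rw [← take_append_drop t l, drop_eq_getElem_cons ht]
    rw [filter_append, filter_cons_of_pos hp]
  have hka : k ≤ a.length := by
    by_contra! h
    obtain ⟨d, hd⟩ := Nat.exists_eq_add_of_lt h
    apply hk
    rw [hsplit, take_append, hd, show a.length + d + 1 - a.length = d + 1 by omega]
    simp
  have htake : (l.filter p).take k = a.take k := by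
    rw [hsplit, take_append_of_le_length hka]
  rw [htake]
  exact ⟨(take_sublist k a).trans filter_sublist, length_take_of_le hka⟩

end List

section Greedy

variable (b : Fin n → ℕ) (E : Finset (Edge n m))

def mapStep (μ : Finset (Edge n m)) (j : Fin m) : Finset (Edge n m) :=
  match (List.finRange n).find? (fun i => decide ((i, j) ∈ E ∧ deg μ i < b i)) with
  | some i => insert (i, j) μ
  | none => μ

theorem MAP_eq_foldl_mapStep (q : Fin m → ℝ) :
    MAP b q E = (sortedTasks m q).foldl (mapStep b E) ∅ := rfl

variable {b E}

theorem mapStep_eq_insert {μ : Finset (Edge n m)} {j : Fin m} {k : Fin n}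
    (hk : (k, j) ∈ E ∧ deg μ k < b k) (hlt : ∀ i < k, ¬((i, j) ∈ E ∧ deg μ i < b i)) :
    mapStep b E μ j = insert (k, j) μ := by
  have hfind : (List.finRange n).find? (fun i => decide ((i, j) ∈ E ∧ deg μ i < b i)) = some k :=
    List.find?_finRange_eq_some_iff.mpr ⟨decide_eq_true hk, fun i hi => decide_eq_false (hlt i hi)⟩
  rw [mapStep, hfind]

theorem mapStep_eq_self {μ : Finset (Edge n m)} {j : Fin m}
    (h : ∀ i, ¬((i, j) ∈ E ∧ deg μ i < b i)) : mapStep b E μ j = μ := by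
  have hfind : (List.finRange n).find? (fun i => decide ((i, j) ∈ E ∧ deg μ i < b i)) = none :=
    List.find?_eq_none.mpr fun i _ => by simpa using h i
  rw [mapStep, hfind]

end Greedy

section TopTasks

variable (q : Fin m → ℝ)

theorem sortedTasks_nodup : (sortedTasks m q).Nodup :=
  (List.perm_insertionSort _ _).nodup_iff.mpr (List.nodup_finRange m)

theorem mem_sortedTasks (j : Fin m) : j ∈ sortedTasks m q :=
  (List.mem_insertionSort _).mpr (List.mem_finRange j)

theorem topTasks_eq_take_filter_sortedTasks (c : Finset (Fin m)) (k : ℕ) :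
    topTasks q c k = (((sortedTasks m q).filter (fun j => decide (j ∈ c))).take k).toFinset := by
  have : Std.Total (fun j j' : Fin m => q j' ≤ q j) := ⟨fun j j' => le_total (q j') (q j)⟩
  have : IsTrans (Fin m) (fun j j' => q j' ≤ q j) := ⟨fun _ _ _ h h' => h'.trans h⟩
  rw [topTasks, sortedTasks, List.filter_insertionSort]

theorem topTasks_subset (c : Finset (Fin m)) (k : ℕ) : topTasks q c k ⊆ c := by
  intro j hj
  rw [topTasks_eq_take_filter_sortedTasks, List.mem_toFinset] at hj
  simpa using (List.mem_filter.mp (List.mem_of_mem_take hj)).2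

theorem card_topTasks_le (c : Finset (Fin m)) (k : ℕ) : (topTasks q c k).card ≤ k :=
  (List.toFinset_card_le _).trans (List.length_take_le _ _)

theorem topTasks_full_of_notMem {c : Finset (Fin m)} {k t : ℕ} (ht : t < (sortedTasks m q).length)
    (hc : (sortedTasks m q)[t] ∈ c) (hk : (sortedTasks m q)[t] ∉ topTasks q c k) :
    (topTasks q c k).card = k ∧ topTasks q c k ⊆ ((sortedTasks m q).take t).toFinset := by
  rw [topTasks_eq_take_filter_sortedTasks, List.mem_toFinset] at hk
  obtain ⟨hsub, hlen⟩ := List.take_filter_sublist_take _ ht (decide_eq_true hc) hk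
  rw [topTasks_eq_take_filter_sortedTasks,
    List.toFinset_card_of_nodup ((hsub.trans (List.take_sublist _ _)).nodup (sortedTasks_nodup q))]
  exact ⟨hlen, fun j hj => List.mem_toFinset.mpr (hsub.subset (List.mem_toFinset.mp hj))⟩

end TopTasks

section FCFS

variable (b : Fin n → ℕ) (q : Fin m → ℝ) (E : Finset (Edge n m))

/-- The task set `Bᵢ`. -/
noncomputable def fcfsTasks (i : Fin n) : Finset (Fin m) :=
  topTasks q ((remTasks b q E i.val).filter (fun j => (i, j) ∈ E)) (b i)

theorem FCFSP_eq_image_fcfsTasks (i : Fin n) :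
    FCFSP b q E i = (fcfsTasks b q E i).image (fun j => (i, j)) := rfl

theorem fcfsTasks_subset (i : Fin n) :
    fcfsTasks b q E i ⊆ (remTasks b q E i.val).filter (fun j => (i, j) ∈ E) :=
  topTasks_subset q _ _

theorem card_fcfsTasks_le (i : Fin n) : (fcfsTasks b q E i).card ≤ b i :=
  card_topTasks_le q _ _

variable {b q E}

theorem mem_remTasks_iff {j : Fin m} {v : ℕ} :
    j ∈ remTasks b q E v ↔ ∀ i : Fin n, i.val < v → j ∉ fcfsTasks b q E i := by
  induction v with
  | zero => simp [remTasks]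
  | succ v ih =>
    rw [remTasks]
    split_ifs with hv
    · rw [Finset.mem_sdiff, ih]
      constructor
      · rintro ⟨h, hjv⟩ i hi
        rcases Nat.lt_succ_iff_lt_or_eq.mp hi with hi | hi
        · exact h i hi
        · obtain rfl : i = ⟨v, hv⟩ := Fin.ext hi
          exact hjv
      · intro h
        exact ⟨fun i hi => h i (hi.trans v.lt_succ_self), h ⟨v, hv⟩ v.lt_succ_self⟩
    · rw [ih]
      refine forall_congr' fun i => ⟨fun h hi => h (by omega), fun h hi => h (by omega)⟩

theorem eq_of_mem_fcfsTasks {i k : Fin n} {j : Fin m} (hi : j ∈ fcfsTasks b q E i)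
    (hk : j ∈ fcfsTasks b q E k) : i = k := by
  have key : ∀ {i k : Fin n}, j ∈ fcfsTasks b q E i → j ∈ fcfsTasks b q E k → ¬i < k :=
    fun hi hk hlt =>
      mem_remTasks_iff.mp (Finset.mem_filter.mp (fcfsTasks_subset b q E _ hk)).1 _ hlt hi
  exact le_antisymm (not_lt.mp (key hk hi)) (not_lt.mp (key hi hk))

theorem mem_FCFSunion {e : Edge n m} : e ∈ FCFSunion b q E ↔ e.2 ∈ fcfsTasks b q E e.1 := by
  obtain ⟨i, j⟩ := e
  simp [FCFSunion, FCFSP_eq_image_fcfsTasks]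

theorem filter_fst_FCFSunion (i : Fin n) :
    (FCFSunion b q E).filter (fun e => e.1 = i) = FCFSP b q E i := by
  ext ⟨i', j⟩
  simp only [Finset.mem_filter, mem_FCFSunion, FCFSP_eq_image_fcfsTasks, Finset.mem_image,
    Prod.mk.injEq]
  constructor
  · rintro ⟨hj, rfl⟩
    exact ⟨j, hj, rfl, rfl⟩
  · rintro ⟨j, hj, rfl, rfl⟩
    exact ⟨hj, rfl⟩

theorem deg_filter_FCFSunion (P : Finset (Fin m)) (i : Fin n) :
    deg ((FCFSunion b q E).filter (fun e => e.2 ∈ P)) i = (fcfsTasks b q E i ∩ P).card := by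
  rw [deg, Finset.filter_comm, filter_fst_FCFSunion, FCFSP_eq_image_fcfsTasks,
    Finset.filter_image, Finset.card_image_of_injective _ (Prod.mk_right_injective i),
    Finset.filter_mem_eq_inter]

end FCFS

section Invariant

variable (b : Fin n → ℕ) (q : Fin m → ℝ) (E : Finset (Edge n m))

noncomputable def fcfsPrefix (t : ℕ) : Finset (Edge n m) :=
  (FCFSunion b q E).filter (fun e => e.2 ∈ ((sortedTasks m q).take t).toFinset)

variable {b q E}

theorem deg_fcfsPrefix_eq_of_notMem {i : Fin n} {t : ℕ} (ht : t < (sortedTasks m q).length)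
    (hB : ∀ i' ≤ i, (sortedTasks m q)[t] ∉ fcfsTasks b q E i')
    (hE : (i, (sortedTasks m q)[t]) ∈ E) :
    deg (fcfsPrefix b q E t) i = b i := by
  have hr : (sortedTasks m q)[t] ∈ remTasks b q E i :=
    mem_remTasks_iff.mpr fun i' hi' => hB i' (Fin.mk_le_mk.mpr hi'.le)
  obtain ⟨hcard, hsub⟩ :=
    topTasks_full_of_notMem q ht (Finset.mem_filter.mpr ⟨hr, hE⟩) (hB i le_rfl)
  rw [fcfsPrefix, deg_filter_FCFSunion, fcfsTasks, Finset.inter_eq_left.mpr hsub, hcard]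

theorem deg_fcfsPrefix_lt_of_mem {k : Fin n} {t : ℕ} (ht : t < (sortedTasks m q).length)
    (hB : (sortedTasks m q)[t] ∈ fcfsTasks b q E k) :
    deg (fcfsPrefix b q E t) k < b k := by
  have hj : (sortedTasks m q)[t] ∉ (sortedTasks m q).take t := by
    rw [List.mem_take_iff_getElem]
    rintro ⟨i, hi, h⟩
    have := (sortedTasks_nodup q).getElem_inj_iff.mp h
    omega
  rw [fcfsPrefix, deg_filter_FCFSunion]
  refine (Finset.card_lt_card ⟨Finset.inter_subset_left, fun h => hj ?_⟩).trans_le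
    (card_fcfsTasks_le b q E k)
  exact List.mem_toFinset.mp (Finset.mem_inter.mp (h hB)).2

theorem mapStep_fcfsPrefix {t : ℕ} (ht : t < (sortedTasks m q).length) :
    mapStep b E (fcfsPrefix b q E t) (sortedTasks m q)[t] = fcfsPrefix b q E (t + 1) := by
  set j := (sortedTasks m q)[t]
  have hnext : ((sortedTasks m q).take (t + 1)).toFinset
      = insert j ((sortedTasks m q).take t).toFinset := by
    rw [List.take_add_one, List.getElem?_eq_getElem ht, Option.toList_some, List.toFinset_append,
      List.toFinset_cons, List.toFinset_nil, insert_empty_eq, Finset.union_singleton]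
  by_cases hex : ∃ k, j ∈ fcfsTasks b q E k
  · obtain ⟨k, hk⟩ := hex
    have hkE := (Finset.mem_filter.mp (fcfsTasks_subset b q E k hk)).2
    rw [mapStep_eq_insert ⟨hkE, deg_fcfsPrefix_lt_of_mem ht hk⟩]
    · ext ⟨i, j'⟩
      simp only [fcfsPrefix, hnext, Finset.mem_insert, Finset.mem_filter, mem_FCFSunion,
        Prod.mk.injEq]
      constructor
      · rintro (⟨rfl, rfl⟩ | h)
        · exact ⟨hk, Or.inl rfl⟩
        · exact ⟨h.1, Or.inr h.2⟩
      · rintro ⟨h, rfl | h'⟩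
        · exact Or.inl ⟨eq_of_mem_fcfsTasks h hk, rfl⟩
        · exact Or.inr ⟨h, h'⟩
    · rintro i hik ⟨hiE, hlt⟩
      refine hlt.ne (deg_fcfsPrefix_eq_of_notMem ht (fun i' hi' h => ?_) hiE)
      exact (hi'.trans_lt hik).ne (eq_of_mem_fcfsTasks h hk)
  · push Not at hex
    rw [mapStep_eq_self]
    · ext ⟨i, j'⟩
      simp only [fcfsPrefix, hnext, Finset.mem_insert, Finset.mem_filter, mem_FCFSunion]
      constructor
      · exact fun h => ⟨h.1, Or.inr h.2⟩
      · rintro ⟨h, rfl | h'⟩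
        · exact absurd h (hex i)
        · exact ⟨h, h'⟩
    · rintro i ⟨hiE, hlt⟩
      exact hlt.ne (deg_fcfsPrefix_eq_of_notMem ht (fun i' _ => hex i') hiE)

theorem foldl_mapStep_take {t : ℕ} (ht : t ≤ (sortedTasks m q).length) :
    ((sortedTasks m q).take t).foldl (mapStep b E) ∅ = fcfsPrefix b q E t := by
  induction t with
  | zero => simp [fcfsPrefix]
  | succ t ih =>
    rw [List.take_add_one, List.getElem?_eq_getElem ht, Option.toList_some, List.foldl_append,
      ih (Nat.le_of_succ_le ht), List.foldl_cons, List.foldl_nil, mapStep_fcfsPrefix]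

theorem MAP_eq_FCFSunion : MAP b q E = FCFSunion b q E := by
  rw [MAP_eq_foldl_mapStep, ← List.take_length (l := sortedTasks m q),
    foldl_mapStep_take le_rfl, fcfsPrefix, List.take_length]
  exact Finset.filter_true_of_mem fun e _ => List.mem_toFinset.mpr (mem_sortedTasks q e.2)

end Invariant

theorem MAP_equals_FCFS_union_general (n m : ℕ) (b : Fin n → ℕ) (q : Fin m → ℝ)
    (E : Finset (Edge n m)) :
    MAP b q E = FCFSunion b q E ∧
    ∀ i, (MAP b q E).filter (fun e => e.1 = i) = FCFSP b q E i :=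
  ⟨MAP_eq_FCFSunion, fun i => by rw [MAP_eq_FCFSunion, filter_fst_FCFSunion]⟩

/-- On every instance, the matching returned by the greedy mechanism
`M_AP` equals the union of the agents' FCFS policies; in particular each agent `i` is
assigned exactly its FCFS task set `Bᵢ`. -/
theorem MAP_equals_FCFS_union (n m : ℕ) (b : Fin n → ℕ) (q : Fin m → ℝ)
    (hq : ∀ j, 0 < q j) (E : Finset (Edge n m)) :
    MAP b q E = FCFSunion b q E ∧
    ∀ i, (MAP b q E).filter (fun e => e.1 = i) = FCFSP b q E i :=
  MAP_equals_FCFS_union_general n m b q E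
end
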